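/- arXiv:math/0506413 — 4 statements merged into one kernel-verified Lean document; each statement's English description precedes it below -/
import Mathlib

section
/- Let w be an element of Thompson's group F and let α be the reduced normal form representing w. Then the length of α equals the word length |w|_I of w with respect to the standard infinite generating set I = {x_0, x_1, x_2, …}; that is, the reduced normal form is a geodesic representative of w. -/
/-! Binary trees, rotations, rotation distances, and Thompson's group `F`. -/

/-- Finite rooted binary trees: every interior node has two ordered children. -/
inductive BinTree : Type
  | leaf : BinTree
  | node : BinTree → BinTree → BinTree

namespace BinTree

/-- The number of interior nodes of a tree. -/
def numNodes : BinTree → ℕ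
  | leaf => 0
  | node l r => numNodes l + numNodes r + 1

/-- The number of leaves of a tree. -/
def numLeaves : BinTree → ℕ
  | leaf => 1
  | node l r => numLeaves l + numLeaves r

/-- `RotR k T T'` : `T'` is obtained from `T` by a right rotation at the node at
level `k` on the right arm of `T` (level `0` is the root). -/
inductive RotR : ℕ → BinTree → BinTree → Prop
  | root (A B C : BinTree) : RotR 0 (node (node A B) C) (node A (node B C))
  | step {k : ℕ} {R R' : BinTree} (L : BinTree) :
      RotR k R R' → RotR (k + 1) (node L R) (node L R')

/-- `RotLA k T T'` : `T'` is obtained from `T` by a right rotation at the node at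
level `k` on the left arm of `T` (level `0` is the root). -/
inductive RotLA : ℕ → BinTree → BinTree → Prop
  | root (A B C : BinTree) : RotLA 0 (node (node A B) C) (node A (node B C))
  | step {k : ℕ} {L L' : BinTree} (R : BinTree) :
      RotLA k L L' → RotLA (k + 1) (node L R) (node L' R)

/-- One rotation (right or left) performed at a right-arm node whose level lies in `levels`. -/
def RightArmStep (levels : Set ℕ) (T T' : BinTree) : Prop :=
  ∃ k ∈ levels, RotR k T T' ∨ RotR k T' T

/-- One rotation (right or left) performed at any node of the right arm. -/
def RAStep (T T' : BinTree) : Prop :=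
  ∃ k, RotR k T T' ∨ RotR k T' T

/-- One rotation at a right-arm node with level in `rlevels`, or at a left-arm node
with level in `llevels`. -/
def SpinalStep (rlevels llevels : Set ℕ) (T T' : BinTree) : Prop :=
  (∃ k ∈ rlevels, RotR k T T' ∨ RotR k T' T) ∨ (∃ k ∈ llevels, RotLA k T T' ∨ RotLA k T' T)

/-- `ChainLen r n T T'` : `T` is transformed into `T'` by a sequence of exactly `n`
steps of the relation `r` (rotations automatically keep the number of interior
nodes constant). -/
def ChainLen (r : BinTree → BinTree → Prop) : ℕ → BinTree → BinTree → Prop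
  | 0, T, T' => T = T'
  | n + 1, T, T' => ∃ U, r T U ∧ ChainLen r n U T'

/-- The rotation distance associated to the step relation `r` is defined. -/
def Reachable (r : BinTree → BinTree → Prop) (T1 T2 : BinTree) : Prop :=
  ∃ n, ChainLen r n T1 T2

/-- The rotation distance associated to the step relation `r` : the least number of
steps transforming the first tree into the second. -/
noncomputable def stepDist (r : BinTree → BinTree → Prop) (T1 T2 : BinTree) : ℕ :=
  sInf {n | ChainLen r n T1 T2}

/-- The all-right tree with `n` interior nodes. -/
def allRight : ℕ → BinTree
  | 0 => leaf
  | n + 1 => node leaf (allRight n)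

/-- `SibPair T k` : leaves number `k` and `k+1` of `T` are the two children of a
common (interior) node of `T`. -/
def SibPair : BinTree → ℕ → Prop
  | leaf, _ => False
  | node leaf leaf, k => k = 0
  | node L R, k => SibPair L k ∨ ∃ j, SibPair R j ∧ k = numLeaves L + j

/-- A tree pair `(T1,T2)` is reduced if no `k` is a sibling pair in both trees. -/
def ReducedPair (T1 T2 : BinTree) : Prop :=
  ¬∃ k, SibPair T1 k ∧ SibPair T2 k

/-- Add one to the first entry of a list. -/
def incFirst : List ℕ → List ℕ
  | [] => []
  | a :: l => (a + 1) :: l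

/-- Leaf exponents of the leaves of a subtree which hangs strictly off the
(global) right arm, so that every node of the subtree contributes. -/
def lexps : BinTree → List ℕ
  | leaf => [0]
  | node L R => incFirst (lexps L) ++ lexps R

/-- The list of leaf exponents of a tree: the `k`-th entry is the length of the
longest path of left edges starting at leaf `k` not touching the right arm. -/
def exps : BinTree → List ℕ
  | leaf => [0]
  | node L R => lexps L ++ exps R

/-- `LeafChildOfRA T h m` : leaf number `m` of `T` is a child of the node at level
`h` on the right arm of `T`. -/
def LeafChildOfRA : BinTree → ℕ → ℕ → Prop
  | leaf, _, _ => False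
  | node L R, 0, m => (L = leaf ∧ m = 0) ∨ (R = leaf ∧ m = numLeaves L)
  | node L R, h + 1, m => ∃ j, LeafChildOfRA R h j ∧ m = numLeaves L + j

/-- `ExpCaretChildOfRA T h m` : leaves `m` and `m+1` of `T` are the two leaves of an
exposed node whose parent is the node at level `h` on the right arm of `T`. -/
def ExpCaretChildOfRA : BinTree → ℕ → ℕ → Prop
  | leaf, _, _ => False
  | node L R, 0, m =>
      (L = node leaf leaf ∧ m = 0) ∨ (R = node leaf leaf ∧ m = numLeaves L)
  | node L R, h + 1, m => ∃ j, ExpCaretChildOfRA R h j ∧ m = numLeaves L + j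

end BinTree

/-- The defining relators of Thompson's group `F`:
`x_i⁻¹ x_n x_i = x_{n+1}` for all `i < n`. -/
def thompsonRels : Set (FreeGroup ℕ) :=
  { w | ∃ i n : ℕ, i < n ∧
      w = (FreeGroup.of i)⁻¹ * FreeGroup.of n * FreeGroup.of i * (FreeGroup.of (n + 1))⁻¹ }

/-- Thompson's group `F`, presented by its standard infinite presentation. -/
abbrev ThompsonF : Type := PresentedGroup thompsonRels

/-- The standard generator `x_i` of Thompson's group `F`. -/
def xg (i : ℕ) : ThompsonF := PresentedGroup.of i

/-- The standard infinite generating set `{x_0, x_1, x_2, …}` of `F`. -/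
def stdGens : Set ThompsonF := Set.range xg

/-- The word length of `w` with respect to a generating set `S` : the least `k`
such that `w` is a product of `k` elements of `S ∪ S⁻¹`. -/
noncomputable def wordLen (S : Set ThompsonF) (w : ThompsonF) : ℕ :=
  sInf {k | ∃ f : Fin k → ThompsonF, (∀ i, f i ∈ S ∪ S⁻¹) ∧ (List.ofFn f).prod = w}

/-- The normal form word
`x_0^{p 0} x_1^{p 1} ⋯ x_{N-1}^{p (N-1)} x_{N-1}^{-(q (N-1))} ⋯ x_1^{-(q 1)} x_0^{-(q 0)}`. -/
def nfWord (p q : ℕ → ℕ) (N : ℕ) : ThompsonF :=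
  ((List.range N).map fun i => xg i ^ p i).prod *
    ((List.range N).reverse.map fun j => (xg j ^ q j)⁻¹).prod

/-- The element of Thompson's group `F` represented by the tree pair `(T1, T2)` :
the positive exponents are the leaf exponents of `T2`, the negative ones those of `T1`. -/
def treePairElem (T1 T2 : BinTree) : ThompsonF :=
  nfWord (fun k => (BinTree.exps T2).getD k 0) (fun k => (BinTree.exps T1).getD k 0)
    (max (BinTree.exps T1).length (BinTree.exps T2).length)

/-- One step of reduction of a normal form (given by its positive exponent function
and its negative exponent function): cancel one `x_i` against one `x_i⁻¹` (possible
when both occur but neither `x_{i+1}` nor `x_{i+1}⁻¹` does) and shift all higher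
indices down by one. -/
def shiftDown (i : ℕ) (p : ℕ → ℕ) : ℕ → ℕ := fun m =>
  if m < i then p m else if m = i then p i - 1 else p (m + 1)

/-- One step of partial reduction: a standard reduction at an index `i > 0`, i.e.
one which never cancels `x_0` against `x_0⁻¹`. -/
def PRedStep (a b : (ℕ → ℕ) × (ℕ → ℕ)) : Prop :=
  ∃ i, 0 < i ∧ 0 < a.1 i ∧ 0 < a.2 i ∧ a.1 (i + 1) = 0 ∧ a.2 (i + 1) = 0 ∧
    b = (shiftDown i a.1, shiftDown i a.2)

open BinTree


section ThompsonAux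
set_option linter.unusedTactic false

theorem xg_rel {i n : ℕ} (h : i < n) : (xg i)⁻¹ * xg n * xg i = xg (n + 1) := by
  have hr : ((FreeGroup.of i)⁻¹ * FreeGroup.of n * FreeGroup.of i * (FreeGroup.of (n + 1))⁻¹ :
      FreeGroup ℕ) ∈ Subgroup.normalClosure thompsonRels :=
    Subgroup.subset_normalClosure ⟨i, n, h, rfl⟩
  have h1 : (PresentedGroup.mk thompsonRels)
      ((FreeGroup.of i)⁻¹ * FreeGroup.of n * FreeGroup.of i * (FreeGroup.of (n + 1))⁻¹) = 1 :=
    (QuotientGroup.eq_one_iff _).2 hr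
  have h2 : (xg i)⁻¹ * xg n * xg i * (xg (n+1))⁻¹ = 1 := by
    simpa [xg, PresentedGroup.of, map_mul, map_inv] using h1
  have h3 : (xg i)⁻¹ * xg n * xg i = xg (n+1) * ((xg (n+1))⁻¹ * ((xg i)⁻¹ * xg n * xg i * (xg (n+1))⁻¹) * xg (n+1)) := by group
  rw [h2] at h3
  simpa using h3

theorem xg_conj_up {i n : ℕ} (h : i < n) : xg n * xg i = xg i * xg (n + 1) := by
  have := xg_rel h
  rw [← this]; group

theorem xg_conj_down {i m : ℕ} (h : i + 2 ≤ m) : xg i * xg m * (xg i)⁻¹ = xg (m - 1) := by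
  obtain ⟨n, rfl⟩ : ∃ n, m = n + 1 := ⟨m - 1, by omega⟩
  have := xg_rel (show i < n by omega)
  simp only [Nat.add_sub_cancel]
  rw [← this]; group

/-! Products of generator powers. -/

def PPl : List ℕ → ℕ → ThompsonF
  | [], _ => 1
  | a :: t, k => xg k ^ a * PPl t (k+1)

@[simp] theorem PPl_nil (k : ℕ) : PPl [] k = 1 := rfl
@[simp] theorem PPl_cons (a : ℕ) (t : List ℕ) (k : ℕ) :
    PPl (a :: t) k = xg k ^ a * PPl t (k+1) := rfl

/-- passing a single generator up through a power. -/
theorem pow_shift {k m : ℕ} (h : k < m) (a : ℕ) :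
    xg m * xg k ^ a = xg k ^ a * xg (m + a) := by
  induction a with
  | zero => simp
  | succ a ih =>
    have h2 : k < m + a := by omega
    calc xg m * xg k ^ (a+1) = (xg m * xg k ^ a) * xg k := by rw [pow_succ]; group
    _ = xg k ^ a * (xg (m+a) * xg k) := by rw [ih]; group
    _ = xg k ^ a * (xg k * xg (m+a+1)) := by rw [xg_conj_up h2]
    _ = xg k ^ (a+1) * xg (m + (a+1)) := by rw [pow_succ]; group

theorem pow_shift_inv {k m : ℕ} (h : k < m) (a : ℕ) :
    (xg k ^ a)⁻¹ * xg m = xg (m + a) * (xg k ^ a)⁻¹ := by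
  have := pow_shift h a
  calc (xg k ^ a)⁻¹ * xg m = (xg k ^ a)⁻¹ * (xg m * xg k ^ a) * (xg k ^ a)⁻¹ := by group
  _ = (xg k ^ a)⁻¹ * (xg k ^ a * xg (m+a)) * (xg k ^ a)⁻¹ := by rw [this]
  _ = xg (m + a) * (xg k ^ a)⁻¹ := by group

/-- one generator passes a whole product from the right, shifting it up. -/
theorem pow_shift' {k m : ℕ} (h : k < m) (a : ℕ) :
    xg m ^ a * xg k = xg k * xg (m+1) ^ a := by
  induction a with
  | zero => simp
  | succ a ih =>
    calc xg m ^ (a+1) * xg k = xg m ^ a * (xg m * xg k) := by rw [pow_succ]; group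
    _ = xg m ^ a * xg k * xg (m+1) := by rw [xg_conj_up h]; group
    _ = xg k * (xg (m+1) ^ a * xg (m+1)) := by rw [ih]; group
    _ = xg k * xg (m+1) ^ (a+1) := by rw [pow_succ]

theorem PPl_shift {t : List ℕ} : ∀ {m k : ℕ}, k < m → PPl t m * xg k = xg k * PPl t (m+1) := by
  induction t with
  | nil => intro m k h; simp
  | cons a t ih =>
    intro m k h
    have hk : k < m + a := by omega
    calc PPl (a::t) m * xg k = xg m ^ a * (PPl t (m+1) * xg k) := by simp [mul_assoc]
    _ = xg m ^ a * (xg k * PPl t (m+2)) := by rw [ih (by omega)]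
    _ = (xg m ^ a * xg k) * PPl t (m+2) := by group
    _ = (xg k * xg (m+1) ^ a) * PPl t (m+2) := by
        rw [pow_shift' h a]
    _ = xg k * PPl (a::t) (m+1) := by simp [mul_assoc]

theorem PPl_shift_inv {t : List ℕ} {m k : ℕ} (h : k < m) :
    (PPl t m)⁻¹ * xg k = xg k * (PPl t (m+1))⁻¹ := by
  have h1 := PPl_shift (t := t) h
  have h2 : PPl t (m+1) = (xg k)⁻¹ * PPl t m * xg k := by rw [mul_assoc, h1]; group
  rw [h2]; group

theorem conj_down_pow {k m : ℕ} (h : k + 2 ≤ m) (a : ℕ) :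
    xg k * xg m ^ a * (xg k)⁻¹ = xg (m-1) ^ a := by
  induction a with
  | zero => simp
  | succ a ih =>
    calc xg k * xg m ^ (a+1) * (xg k)⁻¹
        = (xg k * xg m ^ a * (xg k)⁻¹) * (xg k * xg m * (xg k)⁻¹) := by rw [pow_succ]; group
    _ = xg (m-1) ^ a * xg (m-1) := by rw [ih, xg_conj_down h]
    _ = xg (m-1) ^ (a+1) := by rw [pow_succ]

theorem PPl_conj_down {t : List ℕ} : ∀ {m k : ℕ}, k + 2 ≤ m →
    xg k * PPl t m * (xg k)⁻¹ = PPl t (m-1) := by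
  induction t with
  | nil => intro m k h; simp
  | cons a t ih =>
    intro m k h
    calc xg k * PPl (a::t) m * (xg k)⁻¹
        = (xg k * xg m ^ a * (xg k)⁻¹) * (xg k * PPl t (m+1) * (xg k)⁻¹) := by simp [mul_assoc]
    _ = xg (m-1) ^ a * PPl t (m+1-1) := by rw [conj_down_pow h, ih (by omega)]
    _ = PPl (a::t) (m-1) := by
        have e1 : m + 1 - 1 = (m-1) + 1 := by omega
        rw [e1]; simp

/-! Right multiplication algorithms. -/

def rmq : List ℕ → ℕ → List ℕ × Option ℕ
  | [], d => ([], some d)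
  | a :: t, 0 => if a = 0 then (0 :: 0 :: t, some 0) else ((a-1) :: t, none)
  | a :: t, d+1 => let r := rmq t (d + a); (a :: r.1, r.2.map (· + 1))

def rmp : List ℕ → ℕ → List ℕ
  | [], c => List.replicate c 0 ++ [1]
  | a :: t, 0 => (a+1) :: 0 :: t
  | a :: t, c+1 => a :: rmp t c

def rmqi : List ℕ → ℕ → List ℕ
  | [], c => List.replicate c 0 ++ [1]
  | a :: t, 0 => (a+1) :: t
  | a :: t, c+1 => a :: rmqi t (c + a)

@[simp] theorem PPl_replicate_single (c b k : ℕ) :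
    PPl (List.replicate c 0 ++ [b]) k = xg (k + c) ^ b := by
  induction c generalizing k with
  | zero => simp
  | succ c ih =>
    have : List.replicate (c+1) (0:ℕ) ++ [b] = 0 :: (List.replicate c 0 ++ [b]) := by
      simp [List.replicate_succ]
    rw [this]
    simp only [PPl_cons, pow_zero, one_mul]
    rw [ih]
    have e : k + 1 + c = k + (c+1) := by omega
    rw [e]

theorem RQ : ∀ (Q : List ℕ) (d k : ℕ),
    (PPl Q k)⁻¹ * xg (k + d) =
      (rmq Q d).2.elim ((PPl (rmq Q d).1 k)⁻¹)
        (fun r => xg (k + r) * (PPl (rmq Q d).1 k)⁻¹) := by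
  intro Q
  induction Q with
  | nil => intro d k; simp [rmq]
  | cons a t ih =>
    intro d k
    match d with
    | 0 =>
      by_cases ha : a = 0
      · subst ha
        simp only [rmq, if_pos rfl, Option.elim_some]
        calc (PPl (0::t) k)⁻¹ * xg (k+0)
            = (PPl t (k+1))⁻¹ * xg k := by simp
        _ = xg k * (PPl t (k+2))⁻¹ := by rw [PPl_shift_inv (by omega)]
        _ = xg (k+0) * (PPl (0::0::t) k)⁻¹ := by simp [mul_assoc]
      · simp only [rmq, if_neg ha, Option.elim_none]
        obtain ⟨b, rfl⟩ : ∃ b, a = b + 1 := ⟨a - 1, by omega⟩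
        calc (PPl ((b+1)::t) k)⁻¹ * xg (k+0)
            = (PPl t (k+1))⁻¹ * ((xg k ^ (b+1))⁻¹ * xg k) := by simp [mul_assoc]
        _ = (PPl t (k+1))⁻¹ * (xg k ^ b)⁻¹ := by rw [pow_succ]; group
        _ = (PPl ((b+1-1)::t) k)⁻¹ := by simp [mul_assoc]
    | d+1 =>
      have key : (PPl (a::t) k)⁻¹ * xg (k + (d+1))
          = (PPl t (k+1))⁻¹ * xg ((k+1) + (d + a)) * (xg k ^ a)⁻¹ := by
        have h1 : k < k + (d+1) := by omega
        calc (PPl (a::t) k)⁻¹ * xg (k + (d+1))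
            = (PPl t (k+1))⁻¹ * ((xg k ^ a)⁻¹ * xg (k + (d+1))) := by simp [mul_assoc]
        _ = (PPl t (k+1))⁻¹ * (xg (k + (d+1) + a) * (xg k ^ a)⁻¹) := by
            rw [pow_shift_inv h1 a]
        _ = (PPl t (k+1))⁻¹ * xg ((k+1) + (d + a)) * (xg k ^ a)⁻¹ := by
            have e : k + (d+1) + a = (k+1)+(d+a) := by omega
            rw [e, mul_assoc]
      have ihspec := ih (d + a) (k+1)
      cases hr : (rmq t (d+a)).2 with
      | none =>
        rw [hr, Option.elim_none] at ihspec
        simp only [rmq, hr, Option.map_none, Option.elim_none]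
        rw [key, ihspec]
        simp [mul_assoc]
      | some r =>
        rw [hr, Option.elim_some] at ihspec
        simp only [rmq, hr, Option.map_some, Option.elim_some]
        rw [key, ihspec]
        have e : (k+1) + r = k + (r+1) := by omega
        rw [e]
        simp [mul_assoc]

theorem RP : ∀ (P : List ℕ) (c k : ℕ), PPl P k * xg (k + c) = PPl (rmp P c) k := by
  intro P
  induction P with
  | nil => intro c k; simp [rmp]
  | cons a t ih =>
    intro c k
    match c with
    | 0 =>
      calc PPl (a::t) k * xg (k+0)
          = xg k ^ a * (PPl t (k+1) * xg k) := by simp [mul_assoc]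
      _ = xg k ^ a * (xg k * PPl t (k+2)) := by rw [PPl_shift (by omega)]
      _ = xg k ^ (a+1) * PPl t (k+2) := by rw [pow_succ]; group
      _ = PPl ((a+1) :: 0 :: t) k := by simp [mul_assoc]
      _ = PPl (rmp (a::t) 0) k := by rfl
    | c+1 =>
      calc PPl (a::t) k * xg (k+(c+1))
          = xg k ^ a * (PPl t (k+1) * xg ((k+1) + c)) := by
            have e : k + (c+1) = (k+1) + c := by omega
            rw [e]; simp [mul_assoc]
      _ = xg k ^ a * PPl (rmp t c) (k+1) := by rw [ih]
      _ = PPl (rmp (a::t) (c+1)) k := by rfl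

theorem RQI : ∀ (Q : List ℕ) (c k : ℕ), xg (k + c) * PPl Q k = PPl (rmqi Q c) k := by
  intro Q
  induction Q with
  | nil => intro c k; simp [rmqi]
  | cons a t ih =>
    intro c k
    match c with
    | 0 =>
      calc xg (k+0) * PPl (a::t) k = xg k * xg k ^ a * PPl t (k+1) := by simp [mul_assoc]
      _ = xg k ^ (a+1) * PPl t (k+1) := by rw [pow_succ]; group
      _ = PPl (rmqi (a::t) 0) k := by simp [rmqi, mul_assoc]
    | c+1 =>
      have h1 : k < k + (c+1) := by omega
      calc xg (k+(c+1)) * PPl (a::t) k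
          = (xg (k+(c+1)) * xg k ^ a) * PPl t (k+1) := by simp [mul_assoc]
      _ = xg k ^ a * (xg (k+(c+1)+a) * PPl t (k+1)) := by rw [pow_shift h1 a]; group
      _ = xg k ^ a * (xg ((k+1)+(c+a)) * PPl t (k+1)) := by
            have e : k+(c+1)+a = (k+1)+(c+a) := by omega
            rw [e]
      _ = xg k ^ a * PPl (rmqi t (c+a)) (k+1) := by rw [ih]
      _ = PPl (rmqi (a::t) (c+1)) k := by rfl

/-! Sum lemmas. -/

theorem sum_rmq : ∀ (Q : List ℕ) (d : ℕ),
    (rmq Q d).1.sum + ((rmq Q d).2.elim 1 (fun _ => 0)) = Q.sum := by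
  intro Q
  induction Q with
  | nil => intro d; simp [rmq]
  | cons a t ih =>
    intro d
    match d with
    | 0 =>
      by_cases ha : a = 0
      · subst ha; simp [rmq]
      · simp only [rmq, if_neg ha, Option.elim_none, List.sum_cons]
        omega
    | d+1 =>
      have := ih (d + a)
      cases hr : (rmq t (d+a)).2 with
      | none => simp only [rmq, hr, Option.map_none, Option.elim_none, List.sum_cons] at this ⊢; omega
      | some r => simp only [rmq, hr, Option.map_some, Option.elim_some, List.sum_cons] at this ⊢; omega

theorem sum_rmp : ∀ (P : List ℕ) (c : ℕ), (rmp P c).sum = P.sum + 1 := by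
  intro P
  induction P with
  | nil => intro c; simp [rmp]
  | cons a t ih =>
    intro c
    match c with
    | 0 => simp [rmp]; omega
    | c+1 => simp [rmp, ih]; omega

theorem sum_rmqi : ∀ (Q : List ℕ) (c : ℕ), (rmqi Q c).sum = Q.sum + 1 := by
  intro Q
  induction Q with
  | nil => intro c; simp [rmqi]
  | cons a t ih =>
    intro c
    match c with
    | 0 => simp [rmqi]; omega
    | c+1 => simp [rmqi, ih]; omega

/-! Cancellation. -/

def cancelAt : ℕ → List ℕ → List ℕ
  | _, [] => []
  | 0, a :: t => (a-1) :: t.tail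
  | i+1, a :: t => a :: cancelAt i t

theorem PPl_zero_head {t : List ℕ} (ht : t.getD 0 0 = 0) (m : ℕ) :
    PPl t m = PPl t.tail (m+1) := by
  match t with
  | [] => simp
  | a :: t =>
    simp only [List.getD] at ht
    have : a = 0 := by simpa using ht
    subst this
    simp

theorem cancel_eq : ∀ (i : ℕ) (P Q : List ℕ) (k : ℕ),
    0 < P.getD i 0 → 0 < Q.getD i 0 → P.getD (i+1) 0 = 0 → Q.getD (i+1) 0 = 0 →
    PPl P k * (PPl Q k)⁻¹ = PPl (cancelAt i P) k * (PPl (cancelAt i Q) k)⁻¹ := by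
  intro i
  induction i with
  | zero =>
    intro P Q k hP hQ hP1 hQ1
    match P, Q with
    | a :: Pt, b :: Qt =>
      simp only [List.getD_cons_zero] at hP hQ
      have hPt : Pt.getD 0 0 = 0 := by simpa using hP1
      have hQt : Qt.getD 0 0 = 0 := by simpa using hQ1
      obtain ⟨a', rfl⟩ : ∃ a', a = a' + 1 := ⟨a - 1, by omega⟩
      obtain ⟨b', rfl⟩ : ∃ b', b = b' + 1 := ⟨b - 1, by omega⟩
      have eP : PPl Pt (k+1) = PPl Pt.tail (k+2) := PPl_zero_head hPt (k+1)
      have eQ : PPl Qt (k+1) = PPl Qt.tail (k+2) := PPl_zero_head hQt (k+1)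
      have conjP : xg k * PPl Pt.tail (k+2) * (xg k)⁻¹ = PPl Pt.tail (k+1) := by
        have := PPl_conj_down (t := Pt.tail) (m := k+2) (k := k) (by omega)
        simpa using this
      have conjQ : xg k * PPl Qt.tail (k+2) * (xg k)⁻¹ = PPl Qt.tail (k+1) := by
        have := PPl_conj_down (t := Qt.tail) (m := k+2) (k := k) (by omega)
        simpa using this
      calc PPl ((a'+1)::Pt) k * (PPl ((b'+1)::Qt) k)⁻¹
          = xg k ^ (a'+1) * PPl Pt.tail (k+2) * (PPl Qt.tail (k+2))⁻¹ * (xg k ^ (b'+1))⁻¹ := by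
            simp only [PPl_cons, eP, eQ]; group
      _ = xg k ^ a' * ((xg k * PPl Pt.tail (k+2) * (xg k)⁻¹)
            * (xg k * (PPl Qt.tail (k+2))⁻¹ * (xg k)⁻¹)) * (xg k ^ b')⁻¹ := by
            rw [pow_succ, pow_succ]; group
      _ = xg k ^ a' * (PPl Pt.tail (k+1) * (PPl Qt.tail (k+1))⁻¹) * (xg k ^ b')⁻¹ := by
            rw [conjP]
            congr 2
            have : xg k * (PPl Qt.tail (k+2))⁻¹ * (xg k)⁻¹
                = (xg k * PPl Qt.tail (k+2) * (xg k)⁻¹)⁻¹ := by group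
            rw [this, conjQ]
      _ = PPl (cancelAt 0 ((a'+1)::Pt)) k * (PPl (cancelAt 0 ((b'+1)::Qt)) k)⁻¹ := by
            simp only [cancelAt, Nat.add_sub_cancel, PPl_cons]
            group
  | succ i ih =>
    intro P Q k hP hQ hP1 hQ1
    match P, Q with
    | [], _ => simp at hP
    | _ :: _, [] => simp at hQ
    | a :: Pt, b :: Qt =>
      simp only [List.getD_cons_succ] at hP hQ hP1 hQ1
      have inner := ih Pt Qt (k+1) hP hQ hP1 hQ1
      calc PPl (a::Pt) k * (PPl (b::Qt) k)⁻¹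
          = xg k ^ a * (PPl Pt (k+1) * (PPl Qt (k+1))⁻¹) * (xg k ^ b)⁻¹ := by
            simp only [PPl_cons]; group
      _ = xg k ^ a * (PPl (cancelAt i Pt) (k+1) * (PPl (cancelAt i Qt) (k+1))⁻¹) * (xg k ^ b)⁻¹ := by
            rw [inner]
      _ = PPl (cancelAt (i+1) (a::Pt)) k * (PPl (cancelAt (i+1) (b::Qt)) k)⁻¹ := by
            simp only [cancelAt, PPl_cons]; group

theorem sum_cancelAt : ∀ (i : ℕ) (P : List ℕ), 0 < P.getD i 0 → P.getD (i+1) 0 = 0 →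
    (cancelAt i P).sum + 1 = P.sum := by
  intro i
  induction i with
  | zero =>
    intro P hP hP1
    match P with
    | [] => simp at hP
    | a :: t =>
      simp only [List.getD_cons_zero] at hP
      have ht : t.getD 0 0 = 0 := by simpa using hP1
      match t with
      | [] => simp [cancelAt]; omega
      | c :: t' =>
        simp only [List.getD_cons_zero] at ht
        subst ht
        simp [cancelAt]; omega
  | succ i ih =>
    intro P hP hP1
    match P with
    | [] => simp at hP
    | a :: t =>
      simp only [List.getD_cons_succ] at hP hP1
      have := ih t hP hP1
      simp [cancelAt]; omega

/-! Reduction to reduced form. -/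

def Red (P Q : List ℕ) : Prop :=
  ∀ i, 0 < P.getD i 0 → 0 < Q.getD i 0 → 0 < P.getD (i+1) 0 ∨ 0 < Q.getD (i+1) 0

theorem getD_le_sum : ∀ (P : List ℕ) (i : ℕ), P.getD i 0 ≤ P.sum := by
  intro P
  induction P with
  | nil => intro i; simp
  | cons a t ih =>
    intro i
    match i with
    | 0 => simp
    | i+1 =>
      have := ih i
      simp only [List.getD_cons_succ, List.sum_cons]
      omega

theorem reduce_exists : ∀ (n : ℕ) (P Q : List ℕ), P.sum + Q.sum ≤ n →
    ∃ P' Q', Red P' Q' ∧ PPl P' 0 * (PPl Q' 0)⁻¹ = PPl P 0 * (PPl Q 0)⁻¹ ∧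
      P'.sum + Q'.sum ≤ P.sum + Q.sum := by
  intro n
  induction n with
  | zero =>
    intro P Q h
    refine ⟨P, Q, ?_, rfl, le_refl _⟩
    intro i hP _
    have := getD_le_sum P i
    omega
  | succ n ih =>
    intro P Q h
    by_cases hred : Red P Q
    · exact ⟨P, Q, hred, rfl, le_refl _⟩
    · rw [Red] at hred
      push_neg at hred
      obtain ⟨i, hPi, hQi, hv⟩ := hred
      have hP1 : P.getD (i+1) 0 = 0 := by omega
      have hQ1 : Q.getD (i+1) 0 = 0 := by omega
      have heq := cancel_eq i P Q 0 hPi hQi hP1 hQ1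
      have hsP := sum_cancelAt i P hPi hP1
      have hsQ := sum_cancelAt i Q hQi hQ1
      obtain ⟨P', Q', hred', heq', hsum'⟩ :=
        ih (cancelAt i P) (cancelAt i Q) (by omega)
      exact ⟨P', Q', hred', by rw [heq', heq], by omega⟩

theorem mul_gen_eq (P Q : List ℕ) (i : ℕ) :
    ∃ P' Q', PPl P' 0 * (PPl Q' 0)⁻¹ = (PPl P 0 * (PPl Q 0)⁻¹) * xg i ∧
      P'.sum + Q'.sum ≤ P.sum + Q.sum + 1 := by
  have hrq := RQ Q i 0
  cases hr : (rmq Q i).2 with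
  | none =>
    rw [hr, Option.elim_none] at hrq
    refine ⟨P, (rmq Q i).1, ?_, ?_⟩
    · rw [mul_assoc, ← hrq, show (0:ℕ)+i = i by omega]
    · have hs := sum_rmq Q i
      rw [hr] at hs
      simp only [Option.elim_none] at hs
      omega
  | some r =>
    rw [hr, Option.elim_some] at hrq
    refine ⟨rmp P r, (rmq Q i).1, ?_, ?_⟩
    · have h2 := RP P r 0
      calc PPl (rmp P r) 0 * (PPl (rmq Q i).1 0)⁻¹
          = (PPl P 0 * xg (0 + r)) * (PPl (rmq Q i).1 0)⁻¹ := by rw [h2]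
      _ = PPl P 0 * (xg (0+r) * (PPl (rmq Q i).1 0)⁻¹) := by group
      _ = PPl P 0 * ((PPl Q 0)⁻¹ * xg (0 + i)) := by rw [← hrq]
      _ = (PPl P 0 * (PPl Q 0)⁻¹) * xg i := by rw [show (0:ℕ)+i = i by omega]; group
    · have hs := sum_rmq Q i
      rw [hr] at hs
      simp only [Option.elim_some] at hs
      have hs2 := sum_rmp P r
      omega

theorem mul_geninv_eq (P Q : List ℕ) (i : ℕ) :
    ∃ P' Q', PPl P' 0 * (PPl Q' 0)⁻¹ = (PPl P 0 * (PPl Q 0)⁻¹) * (xg i)⁻¹ ∧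
      P'.sum + Q'.sum ≤ P.sum + Q.sum + 1 := by
  refine ⟨P, rmqi Q i, ?_, ?_⟩
  · have h1 := RQI Q i 0
    rw [show (0:ℕ)+i = i by omega] at h1
    rw [← h1]
    group
  · have := sum_rmqi Q i
    omega

theorem exists_red_nf (L : List ThompsonF)
    (hL : ∀ x ∈ L, x ∈ stdGens ∪ stdGens⁻¹) :
    ∃ P Q, Red P Q ∧ PPl P 0 * (PPl Q 0)⁻¹ = L.prod ∧ P.sum + Q.sum ≤ L.length := by
  induction L using List.reverseRecOn with
  | nil => exact ⟨[], [], fun i h _ => by simp at h, by simp, by simp⟩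
  | append_singleton M g ih =>
    obtain ⟨P, Q, hred, heq, hsum⟩ := ih (fun x hx => hL x (by simp [hx]))
    have hg : g ∈ stdGens ∪ stdGens⁻¹ := hL g (by simp)
    have hprod : (M ++ [g]).prod = M.prod * g := by simp
    have step : ∃ P' Q', PPl P' 0 * (PPl Q' 0)⁻¹ = M.prod * g ∧
        P'.sum + Q'.sum ≤ P.sum + Q.sum + 1 := by
      rcases hg with ⟨j, rfl⟩ | hg2
      · obtain ⟨P', Q', h1, h2⟩ := mul_gen_eq P Q j
        exact ⟨P', Q', by rw [h1, heq], h2⟩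
      · obtain ⟨j, hj⟩ := hg2
        have : g = (xg j)⁻¹ := by rw [hj]; simp
        subst this
        obtain ⟨P', Q', h1, h2⟩ := mul_geninv_eq P Q j
        exact ⟨P', Q', by rw [h1, heq], h2⟩
    obtain ⟨P', Q', heq', hsum'⟩ := step
    obtain ⟨P'', Q'', hred'', heq'', hsum''⟩ := reduce_exists (P'.sum + Q'.sum) P' Q' (le_refl _)
    refine ⟨P'', Q'', hred'', ?_, ?_⟩
    · rw [heq'', heq', hprod]
    · simp only [List.length_append, List.length_singleton]
      omega

abbrev Cant := ℕ → Bool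

def cns (b : Bool) (s : Cant) : Cant := fun n => match n with | 0 => b | n+1 => s n
def tl (s : Cant) : Cant := fun n => s (n+1)

@[simp] theorem cns_zero (b s) : cns b s 0 = b := rfl
@[simp] theorem cns_succ (b s n) : cns b s (n+1) = s n := rfl
@[simp] theorem tl_cns (b s) : tl (cns b s) = s := by funext n; rfl

theorem eta_cns (s : Cant) : s = cns (s 0) (tl s) := by
  funext n; cases n <;> rfl

theorem eta_cns2 (s : Cant) : s = cns (s 0) (cns (s 1) (tl (tl s))) := by
  funext n
  match n with
  | 0 => rfl
  | 1 => rfl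
  | n+2 => rfl

theorem cns_inj {b b' : Bool} {s s' : Cant} (h : cns b s = cns b' s') : b = b' ∧ s = s' := by
  constructor
  · have := congrFun h 0; simpa using this
  · funext n; have := congrFun h (n+1); simpa using this

def x0f : Cant → Cant := fun s =>
  if s 0 then cns true s
  else if s 1 then cns true (cns false (tl (tl s)))
  else tl s

def x0i : Cant → Cant := fun s =>
  if s 0 then (if s 1 then tl s else cns false (cns true (tl (tl s))))
  else cns false s

@[simp] theorem x0f_t (v : Cant) : x0f (cns true v) = cns true (cns true v) := by
  simp [x0f]

@[simp] theorem x0f_ff (u : Cant) : x0f (cns false (cns false u)) = cns false u := by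
  simp [x0f]

@[simp] theorem x0f_ft (u : Cant) : x0f (cns false (cns true u)) = cns true (cns false u) := by
  simp [x0f]

@[simp] theorem x0i_f (v : Cant) : x0i (cns false v) = cns false (cns false v) := by
  simp [x0i]

@[simp] theorem x0i_tf (u : Cant) : x0i (cns true (cns false u)) = cns false (cns true u) := by
  simp [x0i]

@[simp] theorem x0i_tt (u : Cant) : x0i (cns true (cns true u)) = cns true u := by
  simp [x0i]

theorem x0_left_inv : ∀ s, x0i (x0f s) = s := by
  intro s
  rw [eta_cns2 s]
  cases h0 : s 0 <;> cases h1 : s 1 <;> simp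

theorem x0_right_inv : ∀ s, x0f (x0i s) = s := by
  intro s
  rw [eta_cns2 s]
  cases h0 : s 0 <;> cases h1 : s 1 <;> simp

def x0e : Equiv.Perm Cant := ⟨x0f, x0i, x0_left_inv, x0_right_inv⟩

def phif (f : Cant → Cant) : Cant → Cant := fun s => if s 0 then cns true (f (tl s)) else s

@[simp] theorem phif_f (f : Cant → Cant) (v : Cant) : phif f (cns false v) = cns false v := by
  simp [phif]

@[simp] theorem phif_t (f : Cant → Cant) (v : Cant) : phif f (cns true v) = cns true (f v) := by
  simp [phif]

theorem phif_comp (f g : Cant → Cant) (s : Cant) : phif f (phif g s) = phif (f ∘ g) s := by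
  rw [eta_cns s]
  cases h0 : s 0 <;> simp

theorem phif_id (s : Cant) : phif id s = s := by
  rw [eta_cns s]; cases h0 : s 0 <;> simp

def phie (e : Equiv.Perm Cant) : Equiv.Perm Cant :=
  ⟨phif e, phif e.symm, by
    intro s
    rw [phif_comp]
    have : (⇑e.symm ∘ ⇑e) = id := by funext x; simp
    rw [this, phif_id], by
    intro s
    rw [phif_comp]
    have : (⇑e ∘ ⇑e.symm) = id := by funext x; simp
    rw [this, phif_id]⟩

@[simp] theorem phie_apply (e : Equiv.Perm Cant) (s : Cant) : phie e s = phif e s := rfl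

def phiHom : Equiv.Perm Cant →* Equiv.Perm Cant where
  toFun := phie
  map_one' := by
    apply Equiv.ext
    intro s
    show phif ⇑(1 : Equiv.Perm Cant) s = s
    rw [show ⇑(1 : Equiv.Perm Cant) = id from rfl, phif_id]
  map_mul' := by
    intro e1 e2
    apply Equiv.ext
    intro s
    show phif ⇑(e1 * e2) s = phif ⇑e1 (phif ⇑e2 s)
    rw [phif_comp]
    rfl

def XX : ℕ → Equiv.Perm Cant
  | 0 => x0e
  | n+1 => phie (XX n)

theorem REL0 (g : Cant → Cant) (s : Cant) : x0f (phif g s) = phif (phif g) (x0f s) := by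
  rw [eta_cns2 s]
  cases h0 : s 0 <;> cases h1 : s 1
  · simp
  · simp
  · show x0f (phif g (cns true (cns false (tl (tl s))))) = _
    simp
  · simp

theorem XX_rel : ∀ (i n : ℕ), i < n → XX i * XX n = XX (n+1) * XX i := by
  intro i
  induction i with
  | zero =>
    intro n hn
    obtain ⟨m, rfl⟩ : ∃ m, n = m + 1 := ⟨n - 1, by omega⟩
    apply Equiv.ext
    intro s
    show x0e (XX (m+1) s) = XX (m+2) (x0e s)
    exact REL0 (XX m) s
  | succ i ih =>
    intro n hn
    obtain ⟨m, rfl⟩ : ∃ m, n = m + 1 := ⟨n - 1, by omega⟩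
    have := ih m (by omega)
    show phiHom (XX i) * phiHom (XX m) = phiHom (XX (m+1)) * phiHom (XX i)
    rw [← map_mul, ← map_mul, this]

open MulOpposite in
theorem theta_rels : ∀ r ∈ thompsonRels,
    FreeGroup.lift (fun i => op (XX i) : ℕ → (Equiv.Perm Cant)ᵐᵒᵖ) r = 1 := by
  rintro r ⟨i, n, hin, rfl⟩
  simp only [map_mul, map_inv, FreeGroup.lift_apply_of]
  apply MulOpposite.unop_injective
  simp only [unop_mul, unop_inv, unop_op, unop_one]
  have h := XX_rel i n hin
  -- goal : unop of product = 1 ; product reversed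
  have : XX i * XX n * (XX i)⁻¹ = XX (n+1) := by rw [h]; group
  rw [← this]
  group

open MulOpposite in
noncomputable def theta : ThompsonF →* (Equiv.Perm Cant)ᵐᵒᵖ :=
  PresentedGroup.toGroup theta_rels

noncomputable def act (u : ThompsonF) : Cant → Cant := ((theta u).unop : Equiv.Perm Cant)

theorem act_mul (u v : ThompsonF) (s : Cant) : act (u * v) s = act v (act u s) := by
  simp only [act, map_mul, MulOpposite.unop_mul]
  rfl

@[simp] theorem act_xg (i : ℕ) : act (xg i) = ⇑(XX i) := by
  simp only [act, xg, theta]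
  rw [PresentedGroup.toGroup.of]
  rfl

theorem act_pow (u : ThompsonF) (a : ℕ) : act (u ^ a) = ⇑((theta u).unop ^ a) := by
  simp only [act, map_pow]
  rfl

theorem act_inv_pow (u : ThompsonF) (a : ℕ) : act ((u ^ a)⁻¹) = ⇑(((theta u).unop ^ a)⁻¹) := by
  simp only [act, map_inv, map_pow]
  rfl

/-- the shift endomorphism. -/
noncomputable def psi : ThompsonF →* ThompsonF :=
  PresentedGroup.toGroup (f := fun i => xg (i+1)) (by
    rintro r ⟨i, n, hin, rfl⟩
    simp only [map_mul, map_inv, FreeGroup.lift_apply_of]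
    have := xg_rel (show i+1 < n+1 by omega)
    rw [show (xg (i+1))⁻¹ * xg (n+1) * xg (i+1) * (xg (n+1+1))⁻¹
        = ((xg (i+1))⁻¹ * xg (n+1) * xg (i+1)) * (xg (n+1+1))⁻¹ by group, this]
    group)

@[simp] theorem psi_xg (i : ℕ) : psi (xg i) = xg (i+1) := by
  simp only [psi, xg]
  rw [PresentedGroup.toGroup.of]

open MulOpposite in
noncomputable def opPhi : (Equiv.Perm Cant)ᵐᵒᵖ →* (Equiv.Perm Cant)ᵐᵒᵖ where
  toFun := fun x => op (phiHom x.unop)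
  map_one' := by simp
  map_mul' := by intro x y; simp [map_mul]

theorem theta_psi (u : ThompsonF) : theta (psi u) = opPhi (theta u) := by
  have : theta.comp psi = opPhi.comp theta := by
    apply PresentedGroup.ext
    intro i
    show theta (psi (xg i)) = opPhi (theta (xg i))
    rw [psi_xg]
    show theta (xg (i+1)) = opPhi (theta (xg i))
    simp only [xg, theta, PresentedGroup.toGroup.of]
    rfl
  exact DFunLike.congr_fun this u

theorem act_psi (u : ThompsonF) (s : Cant) : act (psi u) s = phif (act u) s := by
  simp only [act, theta_psi]
  rfl

def zoc : ℕ → Cant → Cant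
  | 0, t => cns true t
  | m+1, t => cns false (zoc m t)

theorem zoc_inj : ∀ {m m' : ℕ} {t t' : Cant}, zoc m t = zoc m' t' → m = m' ∧ t = t' := by
  intro m
  induction m with
  | zero =>
    intro m' t t' h
    match m' with
    | 0 =>
      obtain ⟨-, h2⟩ := cns_inj h
      exact ⟨rfl, h2⟩
    | m'+1 =>
      obtain ⟨h1, -⟩ := cns_inj h
      simp at h1
  | succ m ih =>
    intro m' t t' h
    match m' with
    | 0 =>
      obtain ⟨h1, -⟩ := cns_inj h
      simp at h1
    | m'+1 =>
      obtain ⟨-, h2⟩ := cns_inj h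
      obtain ⟨h3, h4⟩ := ih h2
      exact ⟨by omega, h4⟩

theorem x0e_zoc {m : ℕ} (h : 1 ≤ m) (t : Cant) : x0e (zoc (m+1) t) = zoc m t := by
  obtain ⟨j, rfl⟩ : ∃ j, m = j + 1 := ⟨m - 1, by omega⟩
  show x0f (cns false (cns false (zoc j t))) = zoc (j+1) t
  rw [x0f_ff]
  rfl

theorem x0e_pow_zoc : ∀ (a : ℕ) {m : ℕ}, a < m → ∀ t, (x0e ^ a) (zoc m t) = zoc (m - a) t := by
  intro a
  induction a with
  | zero => intro m _ t; simp
  | succ a ih =>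
    intro m hm t
    obtain ⟨j, rfl⟩ : ∃ j, m = j + 1 := ⟨m - 1, by omega⟩
    have h1 : (x0e ^ (a+1)) (zoc (j+1) t) = (x0e ^ a) (x0e (zoc (j+1) t)) := by
      rw [pow_succ]
      rfl
    rw [h1, x0e_zoc (by omega), ih (by omega)]
    have e : j + 1 - (a+1) = j - a := by omega
    rw [e]

theorem x0e_inv_zoc {m : ℕ} (h : 1 ≤ m) (t : Cant) : x0e⁻¹ (zoc m t) = zoc (m+1) t := by
  obtain ⟨j, rfl⟩ : ∃ j, m = j + 1 := ⟨m - 1, by omega⟩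
  show x0i (cns false (zoc j t)) = zoc (j+2) t
  rw [x0i_f]
  rfl

theorem x0e_pow_inv_zoc : ∀ (b : ℕ) {m : ℕ}, 1 ≤ m → ∀ t,
    ((x0e ^ b)⁻¹) (zoc m t) = zoc (m + b) t := by
  intro b
  induction b with
  | zero => intro m _ t; simp
  | succ b ih =>
    intro m hm t
    have h1 : ((x0e ^ (b+1))⁻¹) (zoc m t) = ((x0e ^ b)⁻¹) (x0e⁻¹ (zoc m t)) := by
      rw [pow_succ', mul_inv_rev]
      rfl
    rw [h1, x0e_inv_zoc hm, ih (by omega)]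
    have e : m + (b+1) = (m+1) + b := by omega
    rw [e]

theorem x0e_pow_zoc_self : ∀ (b : ℕ), 1 ≤ b → ∀ t,
    (x0e ^ b) (zoc b t) = cns true (cns false t) := by
  intro b
  induction b with
  | zero => intro h; omega
  | succ b ih =>
    intro _ t
    by_cases hb : b = 0
    · subst hb
      show x0e (zoc 1 t) = _
      show x0f (cns false (cns true t)) = _
      rw [x0f_ft]
    · have h1 : (x0e ^ (b+1)) (zoc (b+1) t) = (x0e ^ b) (x0e (zoc (b+1) t)) := by
        rw [pow_succ]; rfl
      rw [h1, x0e_zoc (by omega), ih (by omega)]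

def PPw (p : ℕ → ℕ) (N : ℕ) : ThompsonF := ((List.range N).map fun i => xg i ^ p i).prod

theorem nfWord_eq_PPw (p q : ℕ → ℕ) (N : ℕ) :
    nfWord p q N = PPw p N * (PPw q N)⁻¹ := by
  unfold nfWord PPw
  congr 1
  rw [List.prod_inv_reverse]
  congr 1
  simp only [← List.map_reverse, List.map_map]
  rfl

theorem PPw_succ (p : ℕ → ℕ) (N : ℕ) :
    PPw p (N+1) = xg 0 ^ p 0 * psi (PPw (fun i => p (i+1)) N) := by
  unfold PPw
  rw [List.range_succ_eq_map]
  rw [map_list_prod]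
  simp only [List.map_cons, List.prod_cons, List.map_map]
  congr 1
  congr 1
  apply List.map_congr_left
  intro i _
  simp [Function.comp, map_pow]

theorem nf_decomp (p q : ℕ → ℕ) (N : ℕ) :
    nfWord p q (N+1) = xg 0 ^ p 0 *
      psi (nfWord (fun i => p (i+1)) (fun i => q (i+1)) N) * (xg 0 ^ q 0)⁻¹ := by
  rw [nfWord_eq_PPw, nfWord_eq_PPw, PPw_succ p N, PPw_succ q N]
  rw [map_mul, map_inv]
  group

theorem theta_xg_unop (i : ℕ) : (theta (xg i)).unop = XX i := by
  simp only [theta, xg, PresentedGroup.toGroup.of, MulOpposite.unop_op]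

theorem act_nf_decomp (p q : ℕ → ℕ) (N : ℕ) (s : Cant) :
    act (nfWord p q (N+1)) s =
      ((x0e ^ q 0)⁻¹) (phif (act (nfWord (fun i => p (i+1)) (fun i => q (i+1)) N))
        ((x0e ^ p 0) s)) := by
  rw [nf_decomp]
  rw [act_mul, act_mul]
  have h1 : act (xg 0 ^ p 0) s = (x0e ^ p 0) s := by
    rw [act_pow, theta_xg_unop]; rfl
  have h3 : ∀ y, act ((xg 0 ^ q 0)⁻¹) y = ((x0e ^ q 0)⁻¹) y := by
    intro y; rw [act_inv_pow, theta_xg_unop]; rfl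
  rw [h1, act_psi, h3]

theorem zoc_succ (m : ℕ) (t : Cant) : zoc (m+1) t = cns false (zoc m t) := rfl

theorem act_nf_zoc (p q : ℕ → ℕ) (N : ℕ) {m : ℕ} (hm : p 0 < m) (t : Cant) :
    act (nfWord p q (N+1)) (zoc m t) = zoc (m - p 0 + q 0) t := by
  rw [act_nf_decomp, x0e_pow_zoc (p 0) hm t]
  obtain ⟨j, hj⟩ : ∃ j, m - p 0 = j + 1 := ⟨m - p 0 - 1, by omega⟩
  rw [hj, zoc_succ, phif_f, ← zoc_succ, x0e_pow_inv_zoc (q 0) (m := j+1) (by omega)]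

theorem act_nf_tzoc (p q : ℕ → ℕ) (N : ℕ) (hp : 1 ≤ p 0) (t : Cant) :
    act (nfWord p q (N+1)) (zoc (p 0) t) =
      ((x0e ^ q 0)⁻¹) (cns true
        (act (nfWord (fun i => p (i+1)) (fun i => q (i+1)) N) (cns false t))) := by
  rw [act_nf_decomp, x0e_pow_zoc_self (p 0) hp t, phif_t]

def RedF (p q : ℕ → ℕ) : Prop := ∀ i, 0 < p i → 0 < q i → 0 < p (i+1) ∨ 0 < q (i+1)
def SuppF (p : ℕ → ℕ) (N : ℕ) : Prop := ∀ i, N ≤ i → p i = 0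

theorem fix_lemma : ∀ (N : ℕ) (p q : ℕ → ℕ), SuppF p N → SuppF q N → RedF p q →
    (∀ s, act (nfWord p q N) (cns false s) = cns false s) → p 0 = 0 ∧ q 0 = 0 := by
  intro N
  induction N with
  | zero => intro p q hp hq _ _; exact ⟨hp 0 (by omega), hq 0 (by omega)⟩
  | succ N ih =>
    intro p q hp hq hred hfix
    have step1 : q 0 = p 0 := by
      have h1 := hfix (zoc (p 0) (fun _ => false))
      rw [← zoc_succ] at h1
      rw [act_nf_zoc p q N (by omega) (fun _ => false)] at h1
      have h2 := (zoc_inj h1).1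
      omega
    by_cases hc : p 0 = 0
    · exact ⟨hc, by omega⟩
    · exfalso
      have hp1 : 1 ≤ p 0 := by omega
      have hSfix : ∀ t, act (nfWord (fun i => p (i+1)) (fun i => q (i+1)) N)
          (cns false t) = cns false t := by
        intro t
        have h1 := hfix (zoc (p 0 - 1) t)
        rw [← zoc_succ] at h1
        rw [show p 0 - 1 + 1 = p 0 by omega] at h1
        rw [act_nf_tzoc p q N hp1 t] at h1
        -- h1 : (x0e ^ q 0)⁻¹ (cns true (S (cns false t))) = zoc (p 0) t
        have h2 := congrArg (⇑(x0e ^ q 0)) h1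
        rw [Equiv.Perm.coe_inv, Equiv.apply_symm_apply] at h2
        rw [step1, x0e_pow_zoc_self (p 0) hp1 t] at h2
        exact (cns_inj h2).2
      have hzero := ih (fun i => p (i+1)) (fun i => q (i+1))
        (fun i hi => hp (i+1) (by omega)) (fun i hi => hq (i+1) (by omega))
        (fun i h1 h2 => hred (i+1) h1 h2) hSfix
      have hz1 : p 1 = 0 := hzero.1
      have hz2 : q 1 = 0 := hzero.2
      rcases hred 0 (by omega) (by omega) with h | h <;>
        simp only [Nat.zero_add] at h <;> omega

theorem act_one (s : Cant) : act 1 s = s := by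
  simp only [act, map_one]
  rfl

theorem nfWord_zero (p q : ℕ → ℕ) : nfWord p q 0 = 1 := by simp [nfWord]

theorem act_nf_shift (p q : ℕ → ℕ) (N : ℕ) (hp0 : p 0 = 0) (hq0 : q 0 = 0) (s : Cant) :
    act (nfWord p q (N+1)) s =
      phif (act (nfWord (fun i => p (i+1)) (fun i => q (i+1)) N)) s := by
  rw [act_nf_decomp, hp0, hq0]
  simp

theorem triv_lemma : ∀ (N : ℕ) (p q : ℕ → ℕ), SuppF p N → SuppF q N → RedF p q →
    (∀ s, act (nfWord p q N) s = s) → ∀ i, p i = 0 ∧ q i = 0 := by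
  intro N
  induction N with
  | zero => intro p q hp hq _ _ i; exact ⟨hp i (by omega), hq i (by omega)⟩
  | succ N ih =>
    intro p q hp hq hred hfix
    obtain ⟨h0p, h0q⟩ := fix_lemma (N+1) p q hp hq hred (fun s => hfix (cns false s))
    have hS : ∀ s, act (nfWord (fun i => p (i+1)) (fun i => q (i+1)) N) s = s := by
      intro s
      have h1 := hfix (cns true s)
      rw [act_nf_shift p q N h0p h0q, phif_t] at h1
      exact (cns_inj h1).2
    have hrest := ih (fun i => p (i+1)) (fun i => q (i+1))
      (fun i hi => hp (i+1) (by omega)) (fun i hi => hq (i+1) (by omega))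
      (fun i h1 h2 => hred (i+1) h1 h2) hS
    intro i
    match i with
    | 0 => exact ⟨h0p, h0q⟩
    | i+1 => exact hrest i

theorem peel_q (p q : ℕ → ℕ) (N : ℕ) (hq : 0 < q 0) :
    nfWord p (fun i => if i = 0 then q 0 - 1 else q i) (N+1) = nfWord p q (N+1) * xg 0 := by
  rw [nf_decomp, nf_decomp]
  have e1 : (fun i => if i + 1 = 0 then q 0 - 1 else q (i+1)) = (fun i => q (i+1)) := by
    funext i; simp
  have e2 : xg 0 ^ q 0 = xg 0 * xg 0 ^ (q 0 - 1) := by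
    rw [← pow_succ']; congr 1; omega
  simp only [if_pos rfl]
  calc xg 0 ^ p 0 * psi (nfWord (fun i => p (i+1)) (fun i => if i + 1 = 0 then q 0 - 1 else q (i+1)) N) * (xg 0 ^ (q 0 - 1))⁻¹
      = xg 0 ^ p 0 * psi (nfWord (fun i => p (i+1)) (fun i => q (i+1)) N) * (xg 0 ^ (q 0 - 1))⁻¹ := by rw [e1]
  _ = xg 0 ^ p 0 * psi (nfWord (fun i => p (i+1)) (fun i => q (i+1)) N) * (xg 0 ^ q 0)⁻¹ * xg 0 := by
      rw [e2]; group

theorem peel_p (p q : ℕ → ℕ) (N : ℕ) (hp : 0 < p 0) :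
    nfWord (fun i => if i = 0 then p 0 - 1 else p i) q (N+1) = (xg 0)⁻¹ * nfWord p q (N+1) := by
  rw [nf_decomp, nf_decomp]
  have e1 : (fun i => if i + 1 = 0 then p 0 - 1 else p (i+1)) = (fun i => p (i+1)) := by
    funext i; simp
  have e2 : xg 0 ^ p 0 = xg 0 * xg 0 ^ (p 0 - 1) := by
    rw [← pow_succ']; congr 1; omega
  simp only [if_pos rfl]
  calc xg 0 ^ (p 0 - 1) * psi (nfWord (fun i => if i + 1 = 0 then p 0 - 1 else p (i+1)) (fun i => q (i+1)) N) * (xg 0 ^ q 0)⁻¹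
      = xg 0 ^ (p 0 - 1) * psi (nfWord (fun i => p (i+1)) (fun i => q (i+1)) N) * (xg 0 ^ q 0)⁻¹ := by rw [e1]
  _ = (xg 0)⁻¹ * (xg 0 ^ p 0 * psi (nfWord (fun i => p (i+1)) (fun i => q (i+1)) N) * (xg 0 ^ q 0)⁻¹) := by
      rw [e2]; group

theorem nf_inj : ∀ (mu N N' : ℕ) (p q p' q' : ℕ → ℕ),
    N + N' + (∑ i ∈ Finset.range N, (p i + q i)) + (∑ i ∈ Finset.range N', (p' i + q' i)) ≤ mu →
    SuppF p N → SuppF q N → SuppF p' N' → SuppF q' N' → RedF p q → RedF p' q' →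
    (∀ s, act (nfWord p q N) s = act (nfWord p' q' N') s) →
    (∀ i, p i = p' i) ∧ (∀ i, q i = q' i) := by
  intro mu
  induction mu with
  | zero =>
    intro N N' p q p' q' hmu hp hq hp' hq' _ _ _
    have hN : N = 0 := by omega
    have hN' : N' = 0 := by omega
    subst hN; subst hN'
    exact ⟨fun i => by rw [hp i (by omega), hp' i (by omega)],
           fun i => by rw [hq i (by omega), hq' i (by omega)]⟩
  | succ mu ih =>
    intro N N' p q p' q' hmu hp hq hp' hq' hred hred' hA
    match N, N' with
    | 0, N' =>
      have h1 : ∀ s, act (nfWord p' q' N') s = s := by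
        intro s
        have := hA s
        rw [nfWord_zero, act_one] at this
        exact this.symm
      have h2 := triv_lemma N' p' q' hp' hq' hred' h1
      exact ⟨fun i => by rw [hp i (by omega), (h2 i).1],
             fun i => by rw [hq i (by omega), (h2 i).2]⟩
    | N+1, 0 =>
      have h1 : ∀ s, act (nfWord p q (N+1)) s = s := by
        intro s
        have := hA s
        rw [nfWord_zero, act_one] at this
        exact this
      have h2 := triv_lemma (N+1) p q hp hq hred h1
      exact ⟨fun i => by rw [hp' i (by omega), (h2 i).1],
             fun i => by rw [hq' i (by omega), (h2 i).2]⟩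
    | N+1, N'+1 =>
      -- germ identity
      have E1 : p' 0 + q 0 = p 0 + q' 0 := by
        have h1 := hA (zoc (p 0 + p' 0 + 1) (fun _ => false))
        rw [act_nf_zoc p q N (by omega), act_nf_zoc p' q' N' (by omega)] at h1
        have h2 := (zoc_inj h1).1
        omega
      -- sums decomposition
      have hsum : ∑ i ∈ Finset.range (N+1), (p i + q i)
          = (∑ i ∈ Finset.range N, (p (i+1) + q (i+1))) + (p 0 + q 0) :=
        Finset.sum_range_succ' _ N
      have hsum' : ∑ i ∈ Finset.range (N'+1), (p' i + q' i)
          = (∑ i ∈ Finset.range N', (p' (i+1) + q' (i+1))) + (p' 0 + q' 0) :=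
        Finset.sum_range_succ' _ N'
      by_cases hq0 : 0 < q 0 ∧ 0 < q' 0
      · -- peel on the q side
        set qA := fun i => if i = 0 then q 0 - 1 else q i with hqA
        set qA' := fun i => if i = 0 then q' 0 - 1 else q' i with hqA'
        have qA0 : qA 0 = q 0 - 1 := by simp [hqA]
        have qAs : ∀ i, qA (i+1) = q (i+1) := fun i => by simp [hqA]
        have qA'0 : qA' 0 = q' 0 - 1 := by simp [hqA']
        have qA's : ∀ i, qA' (i+1) = q' (i+1) := fun i => by simp [hqA']
        have idA := peel_q p q N hq0.1
        have idA' := peel_q p' q' N' hq0.2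
        have hAnew : ∀ s, act (nfWord p qA (N+1)) s = act (nfWord p' qA' (N'+1)) s := by
          intro s
          rw [← hqA, ← hqA'] at *
          rw [idA, idA', act_mul, act_mul, hA]
        have hsA : ∑ i ∈ Finset.range (N+1), (p i + qA i)
            = (∑ i ∈ Finset.range N, (p (i+1) + q (i+1))) + (p 0 + (q 0 - 1)) := by
          rw [Finset.sum_range_succ' _ N]
          simp only [hqA]
          simp
        have hsA' : ∑ i ∈ Finset.range (N'+1), (p' i + qA' i)
            = (∑ i ∈ Finset.range N', (p' (i+1) + q' (i+1))) + (p' 0 + (q' 0 - 1)) := by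
          rw [Finset.sum_range_succ' _ N']
          simp only [hqA']
          simp
        have hres := ih (N+1) (N'+1) p qA p' qA'
          (by omega)
          hp (fun i hi => by
            match i with
            | i+1 => rw [qAs i]; exact hq (i+1) hi)
          hp' (fun i hi => by
            match i with
            | i+1 => rw [qA's i]; exact hq' (i+1) hi)
          (by
            intro i h1 h2
            match i with
            | 0 =>
              rw [qA0] at h2
              rw [qAs 0]
              exact hred 0 h1 (by omega)
            | i+1 =>
              rw [qAs i] at h2
              rw [qAs (i+1)]
              exact hred (i+1) h1 h2)
          (by
            intro i h1 h2
            match i with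
            | 0 =>
              rw [qA'0] at h2
              rw [qA's 0]
              exact hred' 0 h1 (by omega)
            | i+1 =>
              rw [qA's i] at h2
              rw [qA's (i+1)]
              exact hred' (i+1) h1 h2)
          hAnew
        refine ⟨hres.1, fun i => ?_⟩
        have h2 := hres.2 i
        match i with
        | 0 =>
          rw [qA0, qA'0] at h2
          omega
        | i+1 =>
          rw [qAs i, qA's i] at h2
          exact h2
      · by_cases hp0 : 0 < p 0 ∧ 0 < p' 0
        · -- peel on the p side
          set pA := fun i => if i = 0 then p 0 - 1 else p i with hpA
          set pA' := fun i => if i = 0 then p' 0 - 1 else p' i with hpA'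
          have pA0 : pA 0 = p 0 - 1 := by simp [hpA]
          have pAs : ∀ i, pA (i+1) = p (i+1) := fun i => by simp [hpA]
          have pA'0 : pA' 0 = p' 0 - 1 := by simp [hpA']
          have pA's : ∀ i, pA' (i+1) = p' (i+1) := fun i => by simp [hpA']
          have idA := peel_p p q N hp0.1
          have idA' := peel_p p' q' N' hp0.2
          have hAnew : ∀ s, act (nfWord pA q (N+1)) s = act (nfWord pA' q' (N'+1)) s := by
            intro s
            rw [← hpA, ← hpA'] at *
            rw [idA, idA', act_mul, act_mul, hA]
          have hsA : ∑ i ∈ Finset.range (N+1), (pA i + q i)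
              = (∑ i ∈ Finset.range N, (p (i+1) + q (i+1))) + ((p 0 - 1) + q 0) := by
            rw [Finset.sum_range_succ' _ N]
            simp only [hpA]
            simp
          have hsA' : ∑ i ∈ Finset.range (N'+1), (pA' i + q' i)
              = (∑ i ∈ Finset.range N', (p' (i+1) + q' (i+1))) + ((p' 0 - 1) + q' 0) := by
            rw [Finset.sum_range_succ' _ N']
            simp only [hpA']
            simp
          have hres := ih (N+1) (N'+1) pA q pA' q'
            (by omega)
            (fun i hi => by
              match i with
              | i+1 => rw [pAs i]; exact hp (i+1) hi) hq
            (fun i hi => by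
              match i with
              | i+1 => rw [pA's i]; exact hp' (i+1) hi) hq'
            (by
              intro i h1 h2
              match i with
              | 0 =>
                rw [pA0] at h1
                rw [pAs 0]
                exact hred 0 (by omega) h2
              | i+1 =>
                rw [pAs i] at h1
                rw [pAs (i+1)]
                exact hred (i+1) h1 h2)
            (by
              intro i h1 h2
              match i with
              | 0 =>
                rw [pA'0] at h1
                rw [pA's 0]
                exact hred' 0 (by omega) h2
              | i+1 =>
                rw [pA's i] at h1
                rw [pA's (i+1)]
                exact hred' (i+1) h1 h2)
            hAnew
          refine ⟨fun i => ?_, hres.2⟩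
          have h2 := hres.1 i
          match i with
          | 0 =>
            rw [pA0, pA'0] at h2
            omega
          | i+1 =>
            rw [pAs i, pA's i] at h2
            exact h2
        · -- no simultaneous peeling possible
          by_cases hz : q 0 = 0 ∧ q' 0 = 0
          · -- shift case : all four zero
            have hpz : p 0 = p' 0 := by omega
            have hp00 : p 0 = 0 ∧ p' 0 = 0 := by
              rcases Nat.eq_zero_or_pos (p 0) with h | h
              · exact ⟨h, by omega⟩
              · exact absurd ⟨h, by omega⟩ hp0
            have hS : ∀ s, act (nfWord (fun i => p (i+1)) (fun i => q (i+1)) N) s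
                = act (nfWord (fun i => p' (i+1)) (fun i => q' (i+1)) N') s := by
              intro s
              have h1 := hA (cns true s)
              rw [act_nf_shift p q N hp00.1 hz.1, act_nf_shift p' q' N' hp00.2 hz.2,
                phif_t, phif_t] at h1
              exact (cns_inj h1).2
            have eb : ∑ i ∈ Finset.range N, ((fun i => p (i+1)) i + (fun i => q (i+1)) i)
                = ∑ i ∈ Finset.range N, (p (i+1) + q (i+1)) := rfl
            have eb' : ∑ i ∈ Finset.range N', ((fun i => p' (i+1)) i + (fun i => q' (i+1)) i)
                = ∑ i ∈ Finset.range N', (p' (i+1) + q' (i+1)) := rfl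
            have hres := ih N N' (fun i => p (i+1)) (fun i => q (i+1))
              (fun i => p' (i+1)) (fun i => q' (i+1))
              (by rw [eb, eb']; omega)
              (fun i hi => hp (i+1) (by omega)) (fun i hi => hq (i+1) (by omega))
              (fun i hi => hp' (i+1) (by omega)) (fun i hi => hq' (i+1) (by omega))
              (fun i h1 h2 => hred (i+1) h1 h2) (fun i h1 h2 => hred' (i+1) h1 h2)
              hS
            constructor
            · intro i
              match i with
              | 0 => omega
              | i+1 => exact hres.1 i
            · intro i
              match i with
              | 0 => omega
              | i+1 => exact hres.2 i
          · -- core contradiction case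
            exfalso
            by_cases hq0pos : 0 < q 0
            · -- q 0 > 0, q' 0 = 0
              have hq'0 : q' 0 = 0 := by
                rcases Nat.eq_zero_or_pos (q' 0) with h | h
                · exact h
                · exact absurd ⟨hq0pos, h⟩ hq0
              have hp0pos : 0 < p 0 := by omega
              have hSfix : ∀ t, act (nfWord (fun i => p (i+1)) (fun i => q (i+1)) N)
                  (cns false t) = cns false t := by
                intro t
                have h1 := hA (zoc (p 0) t)
                rw [act_nf_tzoc p q N hp0pos t] at h1
                rw [act_nf_zoc p' q' N' (by omega) t] at h1
                rw [show p 0 - p' 0 + q' 0 = q 0 by omega] at h1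
                have h2 := congrArg (⇑(x0e ^ q 0)) h1
                rw [Equiv.Perm.coe_inv, Equiv.apply_symm_apply] at h2
                rw [x0e_pow_zoc_self (q 0) (by omega) t] at h2
                exact (cns_inj h2).2
              obtain ⟨hz1, hz2⟩ := fix_lemma N (fun i => p (i+1)) (fun i => q (i+1))
                (fun i hi => hp (i+1) (by omega)) (fun i hi => hq (i+1) (by omega))
                (fun i h1 h2 => hred (i+1) h1 h2) hSfix
              have hz1' : p 1 = 0 := hz1
              have hz2' : q 1 = 0 := hz2
              rcases hred 0 hp0pos hq0pos with h | h <;>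
                simp only [Nat.zero_add] at h <;> omega
            · -- q 0 = 0, q' 0 > 0
              have hq'0 : 0 < q' 0 := by
                rcases Nat.eq_zero_or_pos (q' 0) with h | h
                · exact absurd ⟨by omega, h⟩ hz
                · exact h
              have hq00 : q 0 = 0 := by omega
              have hp'0pos : 0 < p' 0 := by omega
              have hSfix : ∀ t, act (nfWord (fun i => p' (i+1)) (fun i => q' (i+1)) N')
                  (cns false t) = cns false t := by
                intro t
                have h1 := (hA (zoc (p' 0) t)).symm
                rw [act_nf_tzoc p' q' N' hp'0pos t] at h1
                rw [act_nf_zoc p q N (by omega) t] at h1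
                rw [show p' 0 - p 0 + q 0 = q' 0 by omega] at h1
                have h2 := congrArg (⇑(x0e ^ q' 0)) h1
                rw [Equiv.Perm.coe_inv, Equiv.apply_symm_apply] at h2
                rw [x0e_pow_zoc_self (q' 0) (by omega) t] at h2
                exact (cns_inj h2).2
              obtain ⟨hz1, hz2⟩ := fix_lemma N' (fun i => p' (i+1)) (fun i => q' (i+1))
                (fun i hi => hp' (i+1) (by omega)) (fun i hi => hq' (i+1) (by omega))
                (fun i h1 h2 => hred' (i+1) h1 h2) hSfix
              have hz1' : p' 1 = 0 := hz1
              have hz2' : q' 1 = 0 := hz2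
              rcases hred' 0 hp'0pos hq'0 with h | h <;>
                simp only [Nat.zero_add] at h <;> omega

/-! Bridges between lists and exponent functions. -/

theorem PPl_replicate_zero : ∀ (m k : ℕ), PPl (List.replicate m 0) k = 1 := by
  intro m
  induction m with
  | zero => intro k; simp
  | succ m ih => intro k; simp [List.replicate_succ, ih]

theorem PPl_pad : ∀ (P : List ℕ) (m k : ℕ), PPl (P ++ List.replicate m 0) k = PPl P k := by
  intro P
  induction P with
  | nil => intro m k; simp [PPl_replicate_zero]
  | cons a t ih => intro m k; simp [List.cons_append, ih]

theorem listpad : ∀ (P : List ℕ) (N : ℕ), P.length ≤ N →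
    (List.range N).map (fun i => P.getD i 0) = P ++ List.replicate (N - P.length) 0 := by
  intro P
  induction P with
  | nil =>
    intro N _
    simp only [List.nil_append, List.length_nil, Nat.sub_zero]
    have : (fun i => ([] : List ℕ).getD i 0) = (fun _ => (0:ℕ)) := by
      funext i; simp
    rw [this]
    rw [List.map_const']
    simp
  | cons a t ih =>
    intro N hN
    match N with
    | N+1 =>
      rw [List.range_succ_eq_map, List.map_cons, List.map_map]
      have h1 : ((fun i => (a :: t).getD i 0) ∘ Nat.succ) = (fun i => t.getD i 0) := by
        funext i; simp
      rw [h1]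
      have h2 : t.length ≤ N := by
        simp only [List.length_cons] at hN; omega
      rw [ih N h2]
      have e : N + 1 - (a :: t).length = N - t.length := by
        simp only [List.length_cons]; omega
      simp only [List.getD_cons_zero, List.cons_append, e]

theorem PPl_map_range : ∀ (N : ℕ) (g : ℕ → ℕ) (k : ℕ),
    PPl ((List.range N).map g) k = ((List.range N).map fun i => xg (k+i) ^ g i).prod := by
  intro N
  induction N with
  | zero => intro g k; simp
  | succ N ih =>
    intro g k
    rw [List.range_succ_eq_map, List.map_cons, List.map_cons, List.map_map, List.map_map]
    rw [PPl_cons, List.prod_cons, ih (g ∘ Nat.succ) (k+1), Nat.add_zero]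
    congr 1
    apply congrArg
    apply List.map_congr_left
    intro i _
    show xg (k + 1 + i) ^ (g ∘ Nat.succ) i = xg (k + (i+1)) ^ g (i+1)
    rw [show k + 1 + i = k + (i+1) by omega]
    rfl


theorem PPw_list (P : List ℕ) (N : ℕ) (h : P.length ≤ N) :
    PPw (fun i => P.getD i 0) N = PPl P 0 := by
  unfold PPw
  calc ((List.range N).map fun i => xg i ^ (P.getD i 0)).prod
      = PPl ((List.range N).map (fun i => P.getD i 0)) 0 := by
        rw [PPl_map_range]
        congr 1
        apply List.map_congr_left
        intro i _
        rw [Nat.zero_add]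
  _ = PPl (P ++ List.replicate (N - P.length) 0) 0 := by rw [listpad P N h]
  _ = PPl P 0 := PPl_pad P _ 0

theorem nfWord_of_lists (P Q : List ℕ) (N : ℕ) (hP : P.length ≤ N) (hQ : Q.length ≤ N) :
    nfWord (fun i => P.getD i 0) (fun i => Q.getD i 0) N = PPl P 0 * (PPl Q 0)⁻¹ := by
  rw [nfWord_eq_PPw, PPw_list P N hP, PPw_list Q N hQ]

theorem sum_map_range (f : ℕ → ℕ) : ∀ N, ((List.range N).map f).sum = ∑ i ∈ Finset.range N, f i := by
  intro N
  induction N with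
  | zero => simp
  | succ N ih =>
    rw [List.range_succ, List.map_append, List.sum_append, Finset.sum_range_succ, ih]
    simp

theorem sum_of_supp (f : ℕ → ℕ) {N K : ℕ} (h : N ≤ K) (hs : ∀ i, N ≤ i → f i = 0) :
    ∑ i ∈ Finset.range K, f i = ∑ i ∈ Finset.range N, f i := by
  symm
  apply Finset.sum_subset (Finset.range_subset_range.2 h)
  intro x _ hnx
  exact hs x (by simpa using hnx)

theorem sum_getD (P : List ℕ) (M : ℕ) (h : P.length ≤ M) :
    ∑ i ∈ Finset.range M, P.getD i 0 = P.sum := by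
  rw [← sum_map_range (fun i => P.getD i 0) M, listpad P M h]
  simp

/-! The word of a normal form. -/

def wlp (p : ℕ → ℕ) : ℕ → List ThompsonF
  | 0 => []
  | N+1 => wlp p N ++ List.replicate (p N) (xg N)

def wlq (q : ℕ → ℕ) : ℕ → List ThompsonF
  | 0 => []
  | N+1 => List.replicate (q N) (xg N)⁻¹ ++ wlq q N

theorem PPw_succ_right (p : ℕ → ℕ) (N : ℕ) : PPw p (N+1) = PPw p N * xg N ^ p N := by
  unfold PPw
  rw [List.range_succ, List.map_append, List.prod_append]
  simp

theorem wlp_prod (p : ℕ → ℕ) : ∀ N, (wlp p N).prod = PPw p N := by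
  intro N
  induction N with
  | zero => simp [wlp, PPw]
  | succ N ih =>
    rw [wlp, List.prod_append, ih, List.prod_replicate, PPw_succ_right]

theorem wlq_prod (q : ℕ → ℕ) : ∀ N, (wlq q N).prod = (PPw q N)⁻¹ := by
  intro N
  induction N with
  | zero => simp [wlq, PPw]
  | succ N ih =>
    rw [wlq, List.prod_append, ih, List.prod_replicate, PPw_succ_right]
    rw [mul_inv_rev, inv_pow]

theorem wlp_length (p : ℕ → ℕ) : ∀ N, (wlp p N).length = ∑ i ∈ Finset.range N, p i := by
  intro N
  induction N with
  | zero => simp [wlp]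
  | succ N ih => rw [wlp, List.length_append, ih, Finset.sum_range_succ]; simp

theorem wlq_length (q : ℕ → ℕ) : ∀ N, (wlq q N).length = ∑ i ∈ Finset.range N, q i := by
  intro N
  induction N with
  | zero => simp [wlq]
  | succ N ih =>
    rw [wlq, List.length_append, ih, Finset.sum_range_succ]
    simp [Nat.add_comm]

theorem wlp_mem (p : ℕ → ℕ) : ∀ N, ∀ x ∈ wlp p N, x ∈ stdGens := by
  intro N
  induction N with
  | zero => intro x hx; simp [wlp] at hx
  | succ N ih =>
    intro x hx
    rw [wlp, List.mem_append] at hx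
    rcases hx with h | h
    · exact ih x h
    · have := List.eq_of_mem_replicate h
      subst this
      exact ⟨N, rfl⟩

theorem wlq_mem (q : ℕ → ℕ) : ∀ N, ∀ x ∈ wlq q N, x ∈ stdGens⁻¹ := by
  intro N
  induction N with
  | zero => intro x hx; simp [wlq] at hx
  | succ N ih =>
    intro x hx
    rw [wlq, List.mem_append] at hx
    rcases hx with h | h
    · have := List.eq_of_mem_replicate h
      subst this
      rw [Set.mem_inv]
      simp only [inv_inv]
      exact ⟨N, rfl⟩
    · exact ih x h

theorem ofFn_of_list {G : Type*} (L : List G) (k : ℕ) (h : k = L.length) :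
    List.ofFn (fun i : Fin k => L.get (Fin.cast h i)) = L := by
  subst h
  exact List.ofFn_get L

end ThompsonAux

theorem reduced_normal_form_is_geodesic (p q : ℕ → ℕ) (N : ℕ)
    (hsupp : ∀ i, N ≤ i → p i = 0 ∧ q i = 0)
    (hred : ∀ i, 0 < p i → 0 < q i → 0 < p (i + 1) ∨ 0 < q (i + 1)) :
    wordLen stdGens (nfWord p q N) = ∑ i ∈ Finset.range N, (p i + q i) := by
  classical
  have hTsplit : ∑ i ∈ Finset.range N, (p i + q i)
      = (∑ i ∈ Finset.range N, p i) + (∑ i ∈ Finset.range N, q i) := Finset.sum_add_distrib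
  have hLlen : (wlp p N ++ wlq q N).length = ∑ i ∈ Finset.range N, (p i + q i) := by
    rw [List.length_append, wlp_length, wlq_length, hTsplit]
  have hLprod : (wlp p N ++ wlq q N).prod = nfWord p q N := by
    rw [List.prod_append, wlp_prod, wlq_prod, nfWord_eq_PPw]
  have hmemT : (∑ i ∈ Finset.range N, (p i + q i)) ∈
      {k | ∃ f : Fin k → ThompsonF, (∀ i, f i ∈ stdGens ∪ stdGens⁻¹) ∧
        (List.ofFn f).prod = nfWord p q N} := by
    refine ⟨fun i => (wlp p N ++ wlq q N).get (Fin.cast hLlen.symm i), ?_, ?_⟩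
    · intro i
      have hx : (wlp p N ++ wlq q N).get (Fin.cast hLlen.symm i) ∈ wlp p N ++ wlq q N :=
        List.get_mem _ _
      rw [List.mem_append] at hx
      rcases hx with h | h
      · exact Or.inl (wlp_mem p N _ h)
      · exact Or.inr (wlq_mem q N _ h)
    · rw [ofFn_of_list _ _ hLlen.symm, hLprod]
  have hlow : ∀ k ∈ {k | ∃ f : Fin k → ThompsonF, (∀ i, f i ∈ stdGens ∪ stdGens⁻¹) ∧
      (List.ofFn f).prod = nfWord p q N}, (∑ i ∈ Finset.range N, (p i + q i)) ≤ k := by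
    rintro k ⟨f, hf, hprod⟩
    have hmem : ∀ x ∈ List.ofFn f, x ∈ stdGens ∪ stdGens⁻¹ := by
      intro x hx
      rw [List.mem_ofFn] at hx
      obtain ⟨i, rfl⟩ := hx
      exact hf i
    obtain ⟨P, Q, hredPQ, heq, hsum⟩ := exists_red_nf (List.ofFn f) hmem
    rw [hprod] at heq
    have hPl : P.length ≤ max P.length Q.length := le_max_left _ _
    have hQl : Q.length ≤ max P.length Q.length := le_max_right _ _
    have heq2 : nfWord (fun i => P.getD i 0) (fun i => Q.getD i 0) (max P.length Q.length)
        = nfWord p q N := by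
      rw [nfWord_of_lists P Q _ hPl hQl, heq]
    have hAeq : ∀ s, act (nfWord p q N) s
        = act (nfWord (fun i => P.getD i 0) (fun i => Q.getD i 0) (max P.length Q.length)) s := by
      intro s; rw [heq2]
    have hres := nf_inj
      (N + (max P.length Q.length) + (∑ i ∈ Finset.range N, (p i + q i))
        + (∑ i ∈ Finset.range (max P.length Q.length),
            ((fun i => P.getD i 0) i + (fun i => Q.getD i 0) i)))
      N (max P.length Q.length) p q (fun i => P.getD i 0) (fun i => Q.getD i 0) (le_refl _)
      (fun i hi => (hsupp i hi).1) (fun i hi => (hsupp i hi).2)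
      (fun i hi => List.getD_eq_default _ _ (le_trans hPl hi))
      (fun i hi => List.getD_eq_default _ _ (le_trans hQl hi))
      hred hredPQ hAeq
    have e1 : ∑ i ∈ Finset.range (max N (max P.length Q.length)), (p i + q i)
        = ∑ i ∈ Finset.range N, (p i + q i) :=
      sum_of_supp _ (le_max_left _ _) (fun i hi => by have h := hsupp i hi; omega)
    have e2 : ∑ i ∈ Finset.range (max N (max P.length Q.length)), (P.getD i 0 + Q.getD i 0)
        = ∑ i ∈ Finset.range (max P.length Q.length), (P.getD i 0 + Q.getD i 0) :=
      sum_of_supp _ (le_max_right _ _) (fun i hi => by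
        rw [List.getD_eq_default _ _ (le_trans hPl hi),
          List.getD_eq_default _ _ (le_trans hQl hi)])
    have e3 : ∑ i ∈ Finset.range (max N (max P.length Q.length)), (p i + q i)
        = ∑ i ∈ Finset.range (max N (max P.length Q.length)), (P.getD i 0 + Q.getD i 0) :=
      Finset.sum_congr rfl (fun i _ => by rw [hres.1 i, hres.2 i])
    have e4 : ∑ i ∈ Finset.range (max P.length Q.length), (P.getD i 0 + Q.getD i 0)
        = P.sum + Q.sum := by
      rw [Finset.sum_add_distrib, sum_getD P _ hPl, sum_getD Q _ hQl]
    have hk : (List.ofFn f).length = k := List.length_ofFn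
    omega
  apply le_antisymm
  · exact Nat.sInf_le hmemT
  · exact le_csInf ⟨_, hmemT⟩ hlow
end

section
/- For every n ≥ 3 and any two trees T1 and T2 each with n interior nodes, the restricted rotation distance satisfies d_RR(T1,T2) ≤ 4n − 8. -/
open BinTree

/-! ### Auxiliary development for the 4n-8 bound -/

/-- Length of the right arm. -/
def armLen : BinTree → ℕ
  | leaf => 0
  | node _ R => armLen R + 1

/-- Left comb with `k` interior nodes. -/
def lcomb : ℕ → BinTree
  | 0 => leaf
  | k + 1 => node (lcomb k) leaf

lemma armLen_le_numNodes : ∀ T : BinTree, armLen T ≤ numNodes T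
  | leaf => le_refl 0
  | node L R => by
      have := armLen_le_numNodes R
      simp only [armLen, numNodes]
      omega

lemma chainLen_trans {r : BinTree → BinTree → Prop} :
    ∀ (m k : ℕ) (a b c : BinTree), ChainLen r m a b → ChainLen r k b c →
      ChainLen r (m + k) a c := by
  intro m
  induction m with
  | zero =>
      intro k a b c h h'
      have hab : a = b := h
      subst hab
      rw [Nat.zero_add]
      exact h'
  | succ m ih =>
      intro k a b c h h'
      obtain ⟨U, hU, hrest⟩ := h
      rw [show m + 1 + k = (m + k) + 1 by omega]
      exact ⟨U, hU, ih k U b c hrest h'⟩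

lemma chainLen_symm {r : BinTree → BinTree → Prop}
    (hr : ∀ a b, r a b → r b a) :
    ∀ (m : ℕ) (a b : BinTree), ChainLen r m a b → ChainLen r m b a := by
  intro m
  induction m with
  | zero =>
      intro a b h
      exact (h : a = b).symm
  | succ m ih =>
      intro a b h
      obtain ⟨U, hU, hrest⟩ := h
      have h1 : ChainLen r m b U := ih U b hrest
      have h2 : ChainLen r 1 U a := ⟨a, hr a U hU, rfl⟩
      exact chainLen_trans m 1 b U a h1 h2

lemma rightArmStep_symm (a b : BinTree) (h : RightArmStep {0, 1} a b) :
    RightArmStep {0, 1} b a := by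
  obtain ⟨k, hk, h⟩ := h
  exact ⟨k, hk, h.symm⟩

lemma step_rotR0 {A B C : BinTree} :
    RightArmStep {0, 1} (node (node A B) C) (node A (node B C)) :=
  ⟨0, by simp, Or.inl (RotR.root A B C)⟩

lemma step_rotL0 {A B C : BinTree} :
    RightArmStep {0, 1} (node A (node B C)) (node (node A B) C) :=
  ⟨0, by simp, Or.inr (RotR.root A B C)⟩

lemma step_rotR1 {L A B C : BinTree} :
    RightArmStep {0, 1} (node L (node (node A B) C)) (node L (node A (node B C))) :=
  ⟨1, by simp, Or.inl (RotR.step L (RotR.root A B C))⟩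

lemma numNodes_eq_zero : ∀ {T : BinTree}, numNodes T = 0 → T = leaf
  | leaf, _ => rfl
  | node _ _, h => by simp [numNodes] at h

/-- Phase B: with a left comb already accumulated on the left of the root, any
remaining right part `R` can be consumed in exactly `2·numNodes R − armLen R − 2`
moves at levels 0 and 1. -/
lemma phaseB : ∀ (c : ℕ) (R : BinTree) (j : ℕ), 2 ≤ numNodes R →
    c + armLen R + 2 = 2 * numNodes R →
    ChainLen (RightArmStep {0, 1}) c (node (lcomb j) R)
      (node (lcomb (j + numNodes R - 2)) (node leaf (node leaf leaf))) := by
  intro c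
  induction c using Nat.strong_induction_on with
  | _ c ih =>
  intro R j h2 heq
  match R with
  | leaf => simp [numNodes] at h2
  | node (node A B) R' =>
      have hal : armLen R' ≤ numNodes R' := armLen_le_numNodes R'
      have hc : 1 ≤ c := by
        simp only [numNodes, armLen] at heq
        omega
      obtain ⟨c', rfl⟩ : ∃ c', c = c' + 1 := ⟨c - 1, by omega⟩
      have hnn : numNodes (node A (node B R')) = numNodes (node (node A B) R') := by
        simp only [numNodes]; omega
      have h2' : 2 ≤ numNodes (node A (node B R')) := by rw [hnn]; exact h2
      have heq' : c' + armLen (node A (node B R')) + 2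
          = 2 * numNodes (node A (node B R')) := by
        rw [hnn]
        simp only [armLen] at heq ⊢
        omega
      have hrec := ih c' (by omega) (node A (node B R')) j h2' heq'
      rw [hnn] at hrec
      exact ⟨node (lcomb j) (node A (node B R')), step_rotR1, hrec⟩
  | node leaf leaf => simp [numNodes] at h2
  | node leaf (node X Y) =>
      by_cases hXY : X = leaf ∧ Y = leaf
      · obtain ⟨rfl, rfl⟩ := hXY
        have hc : c = 0 := by
          simp only [numNodes, armLen] at heq
          omega
        subst hc
        have hidx : j + numNodes (node leaf (node leaf leaf)) - 2 = j := by
          simp [numNodes]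
        show node (lcomb j) (node leaf (node leaf leaf))
            = node (lcomb (j + numNodes (node leaf (node leaf leaf)) - 2))
                (node leaf (node leaf leaf))
        rw [hidx]
      · have h2' : 2 ≤ numNodes (node X Y) := by
          rcases Classical.em (X = leaf) with rfl | hX
          · have hY : Y ≠ leaf := fun h => hXY ⟨rfl, h⟩
            have : numNodes Y ≠ 0 := fun h => hY (numNodes_eq_zero h)
            simp only [numNodes]; omega
          · have : numNodes X ≠ 0 := fun h => hX (numNodes_eq_zero h)
            simp only [numNodes]; omega
        have hc : 1 ≤ c := by
          have hal : armLen Y ≤ numNodes Y := armLen_le_numNodes Y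
          have h2'' := h2'
          simp only [numNodes] at h2''
          simp only [numNodes, armLen] at heq
          omega
        obtain ⟨c', rfl⟩ : ∃ c', c = c' + 1 := ⟨c - 1, by omega⟩
        have heq' : c' + armLen (node X Y) + 2 = 2 * numNodes (node X Y) := by
          simp only [numNodes, armLen] at heq ⊢
          omega
        have hrec := ih c' (by omega) (node X Y) (j + 1) h2' heq'
        have hidx : j + 1 + numNodes (node X Y) - 2
            = j + numNodes (node leaf (node X Y)) - 2 := by
          simp only [numNodes]; omega
        rw [hidx] at hrec
        have hstep : RightArmStep {0, 1} (node (lcomb j) (node leaf (node X Y)))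
            (node (lcomb (j + 1)) (node X Y)) := by
          show RightArmStep {0, 1} (node (lcomb j) (node leaf (node X Y)))
            (node (node (lcomb j) leaf) (node X Y))
          exact step_rotL0
        exact ⟨node (lcomb (j + 1)) (node X Y), hstep, hrec⟩

/-- Phase A followed by phase B: any tree with `n ≥ 3` interior nodes reaches the
hub tree in exactly `2·n − armLen − 3` moves at levels 0 and 1. -/
lemma phaseA : ∀ (L R : BinTree) (c : ℕ),
    3 ≤ numNodes (node L R) →
    c + armLen (node L R) + 3 = 2 * numNodes (node L R) →
    ChainLen (RightArmStep {0, 1}) c (node L R)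
      (node (lcomb (numNodes (node L R) - 3)) (node leaf (node leaf leaf))) := by
  intro L
  induction L with
  | leaf =>
      intro R c h3 heq
      have h2 : 2 ≤ numNodes R := by
        simp only [numNodes] at h3; omega
      have heq' : c + armLen R + 2 = 2 * numNodes R := by
        simp only [numNodes, armLen] at heq; omega
      have := phaseB c R 0 h2 heq'
      have hidx : 0 + numNodes R - 2 = numNodes (node leaf R) - 3 := by
        simp only [numNodes]; omega
      rw [hidx] at this
      exact this
  | node A B ihA _ =>
      intro R c h3 heq
      have hal : armLen R ≤ numNodes R := armLen_le_numNodes R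
      have hc : 1 ≤ c := by
        simp only [numNodes, armLen] at heq h3
        omega
      obtain ⟨c', rfl⟩ : ∃ c', c = c' + 1 := ⟨c - 1, by omega⟩
      have hnn : numNodes (node A (node B R)) = numNodes (node (node A B) R) := by
        simp only [numNodes]; omega
      have h3' : 3 ≤ numNodes (node A (node B R)) := by rw [hnn]; exact h3
      have heq' : c' + armLen (node A (node B R)) + 3
          = 2 * numNodes (node A (node B R)) := by
        rw [hnn]
        simp only [armLen] at heq ⊢
        omega
      have hrec := ihA (node B R) c' h3' heq'
      rw [hnn] at hrec
      exact ⟨node A (node B R), step_rotR0, hrec⟩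

theorem restricted_rotation_distance_le (n : ℕ) (hn : 3 ≤ n) (T1 T2 : BinTree)
    (h1 : T1.numNodes = n) (h2 : T2.numNodes = n) :
    Reachable (RightArmStep {0, 1}) T1 T2 ∧
      stepDist (RightArmStep {0, 1}) T1 T2 ≤ 4 * n - 8 := by
  obtain ⟨L1, R1, rfl⟩ : ∃ L R, T1 = node L R := by
    cases T1 with
    | leaf => simp [numNodes] at h1; omega
    | node L R => exact ⟨L, R, rfl⟩
  obtain ⟨L2, R2, rfl⟩ : ∃ L R, T2 = node L R := by
    cases T2 with
    | leaf => simp [numNodes] at h2; omega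
    | node L R => exact ⟨L, R, rfl⟩
  have ha1 : armLen (node L1 R1) ≤ n := h1 ▸ armLen_le_numNodes _
  have ha2 : armLen (node L2 R2) ≤ n := h2 ▸ armLen_le_numNodes _
  have ha1' : 1 ≤ armLen (node L1 R1) := by simp [armLen]
  have ha2' : 1 ≤ armLen (node L2 R2) := by simp [armLen]
  set c1 := 2 * n - armLen (node L1 R1) - 3 with hc1
  set c2 := 2 * n - armLen (node L2 R2) - 3 with hc2
  have hch1 := phaseA L1 R1 c1 (h1 ▸ hn) (by rw [h1]; omega)
  have hch2 := phaseA L2 R2 c2 (h2 ▸ hn) (by rw [h2]; omega)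
  rw [h1] at hch1
  rw [h2] at hch2
  have hch2' := chainLen_symm rightArmStep_symm c2 _ _ hch2
  have hch : ChainLen (RightArmStep {0, 1}) (c1 + c2) (node L1 R1) (node L2 R2) :=
    chainLen_trans c1 c2 _ _ _ hch1 hch2'
  refine ⟨⟨c1 + c2, hch⟩, ?_⟩
  have hle : stepDist (RightArmStep {0, 1}) (node L1 R1) (node L2 R2) ≤ c1 + c2 :=
    Nat.sInf_le hch
  omega
end

section
/- For every n ≥ 3 there exist trees T1′ and T2′, each with n interior nodes, whose restricted rotation distance satisfies d_RR(T1′,T2′) = 4n − 8; thus the upper bound 4n − 8 on restricted rotation distance is sharp. -/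
open BinTree


deriving instance DecidableEq for BinTree

namespace RRD

open BinTree Multiset
open scoped Classical

/-- Left comb with `k` interior nodes. -/
def leftComb : ℕ → BinTree
  | 0 => leaf
  | k + 1 => node (leftComb k) leaf

@[simp] lemma numNodes_leftComb (k : ℕ) : (leftComb k).numNodes = k := by
  induction k with
  | zero => rfl
  | succ k ih => simp [leftComb, numNodes, ih]

@[simp] lemma numNodes_allRight (m : ℕ) : (allRight m).numNodes = m := by
  induction m with
  | zero => rfl
  | succ m ih => simp [allRight, numNodes, ih]

@[simp] lemma numLeaves_allRight (m : ℕ) : (allRight m).numLeaves = m + 1 := by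
  induction m with
  | zero => rfl
  | succ m ih => simp [allRight, numLeaves, ih]; omega

@[simp] lemma numLeaves_leftComb (k : ℕ) : (leftComb k).numLeaves = k + 1 := by
  induction k with
  | zero => rfl
  | succ k ih => simp [leftComb, numLeaves, ih]

/-- All nodes of a subtree, recorded as (absolute start leaf index, shape). -/
def caretsL : BinTree → ℕ → Multiset (ℕ × BinTree)
  | leaf, _ => 0
  | node A B, off =>
      (off, node A B) ::ₘ (caretsL A off + caretsL B (off + numLeaves A))

/-- All nodes not on the right arm. -/
def caretsR : BinTree → ℕ → Multiset (ℕ × BinTree)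
  | leaf, _ => 0
  | node A B, off => caretsL A off + caretsR B (off + numLeaves A)

/-- The carets of a tree. -/
def car (T : BinTree) : Multiset (ℕ × BinTree) := caretsR T 0

/-- There is a caret starting at leaf 0 with `s` leaves. -/
def zc (s : ℕ) (M : Multiset (ℕ × BinTree)) : Prop :=
  ∃ V, (0, V) ∈ M ∧ numLeaves V = s

/-- Our first tree. -/
def Tone (t : ℕ) : BinTree := node (allRight (t + 2)) leaf

/-- Our second tree. -/
def Ttwo (t : ℕ) : BinTree :=
  node (node (node leaf (leftComb t)) leaf) leaf

def NN (t : ℕ) : Multiset (ℕ × BinTree) := car (Ttwo t)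

/-- The potential function. -/
noncomputable def Phi (t : ℕ) (M : Multiset (ℕ × BinTree)) : ℕ :=
  (M - NN t).card + (NN t - M).card +
    2 * ((Finset.range t).filter
      (fun i => (i + 2, allRight (t - i)) ∈ M ∧ ¬ zc (i + 2) M)).card

/-- Transition: a right rotation at level 0 or 1 removes exactly one caret,
and if the removed caret starts at leaf `s ≥ 2`, there is a caret spanning
leaves `[0, s-1]`. -/
lemma car_rotR {k : ℕ} {T T' : BinTree} (hk : k = 0 ∨ k = 1) (h : RotR k T T') :
    ∃ sg : ℕ × BinTree, car T = sg ::ₘ car T' ∧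
      (2 ≤ sg.1 → zc sg.1 (car T)) := by
  rcases hk with rfl | rfl
  · cases h with
    | root A B C =>
        refine ⟨(0, node A B), ?_, fun hh => by simp at hh⟩
        simp only [car, caretsR, caretsL, numLeaves, Nat.zero_add, Nat.add_assoc,
          ← Multiset.singleton_add]
        abel
  · cases h with
    | step L h' =>
        cases h' with
        | root A B C =>
            refine ⟨(numLeaves L, node A B), ?_, ?_⟩
            · simp only [car, caretsR, caretsL, numLeaves, Nat.zero_add, Nat.add_assoc,
                ← Multiset.singleton_add]
              abel
            · intro hs
              cases L with
              | leaf => simp [numLeaves] at hs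
              | node P Q =>
                  refine ⟨node P Q, ?_, rfl⟩
                  simp only [car, caretsR]
                  exact Multiset.mem_add.mpr (Or.inl (by simp [caretsL]))

section MultisetHelpers

variable {α : Type*} [DecidableEq α] (a : α) (s u : Multiset α)

lemma card_cons_sub_le : ((a ::ₘ s) - u).card ≤ (s - u).card + 1 := by
  have h : (a ::ₘ s) - u ≤ a ::ₘ (s - u) := by
    rw [Multiset.le_iff_count]
    intro x
    by_cases hx : x = a <;>
      simp [hx, Multiset.count_sub, Multiset.count_cons] <;> omega
  simpa using Multiset.card_le_card h

lemma card_sub_cons_le : (u - (a ::ₘ s)).card ≤ (u - s).card :=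
  Multiset.card_le_card (tsub_le_tsub_left (Multiset.le_cons_self s a) u)

lemma card_sub_le_cons_sub : (s - u).card ≤ ((a ::ₘ s) - u).card :=
  Multiset.card_le_card (tsub_le_tsub_right (Multiset.le_cons_self s a) u)

lemma card_sub_le_sub_cons : (u - s).card ≤ (u - (a ::ₘ s)).card + 1 := by
  have h : u - s ≤ a ::ₘ (u - (a ::ₘ s)) := by
    rw [Multiset.le_iff_count]
    intro x
    by_cases hx : x = a <;>
      simp [hx, Multiset.count_sub, Multiset.count_cons] <;> omega
  simpa using Multiset.card_le_card h

lemma cons_sub_of_not_mem (h : a ∉ u) : (a ::ₘ s) - u = a ::ₘ (s - u) := by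
  have hu : u.count a = 0 := Multiset.count_eq_zero_of_notMem h
  ext x
  by_cases hx : x = a <;>
    simp [hx, Multiset.count_sub, Multiset.count_cons, hu] <;> omega

lemma sub_cons_of_not_mem (h : a ∉ u) : u - (a ::ₘ s) = u - s := by
  have hu : u.count a = 0 := Multiset.count_eq_zero_of_notMem h
  ext x
  by_cases hx : x = a <;>
    simp [hx, Multiset.count_sub, Multiset.count_cons, hu]

lemma sub_eq_self_of_disj (h : ∀ x ∈ s, x ∉ u) : s - u = s := by
  ext x
  by_cases hx : x ∈ s
  · have : u.count x = 0 := Multiset.count_eq_zero_of_notMem (h x hx)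
    simp [Multiset.count_sub, this]
  · have : s.count x = 0 := Multiset.count_eq_zero_of_notMem hx
    simp [Multiset.count_sub, this]

end MultisetHelpers

lemma filter_card_mono {t : ℕ} {P Q : ℕ → Prop} {iP : DecidablePred P}
    {iQ : DecidablePred Q} (h : ∀ i ∈ Finset.range t, P i → Q i) :
    ((Finset.range t).filter P).card ≤ ((Finset.range t).filter Q).card := by
  apply Finset.card_le_card
  intro i hi
  rw [Finset.mem_filter] at hi ⊢
  exact ⟨hi.1, h i hi.1 hi.2⟩

lemma zc_mono {s : ℕ} {sg : ℕ × BinTree} {M : Multiset (ℕ × BinTree)}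
    (h : zc s M) : zc s (sg ::ₘ M) := by
  obtain ⟨V, hV, hl⟩ := h
  exact ⟨V, Multiset.mem_cons_of_mem hV, hl⟩

lemma phi_destroy {t : ℕ} (sg : ℕ × BinTree) (M : Multiset (ℕ × BinTree))
    (hcond : 2 ≤ sg.1 → zc sg.1 (sg ::ₘ M)) :
    Phi t (sg ::ₘ M) ≤ Phi t M + 1 := by
  unfold Phi
  have h1 := card_cons_sub_le sg M (NN t)
  have h2 := card_sub_cons_le sg M (NN t)
  have h3 : ((Finset.range t).filter
        (fun i => (i + 2, allRight (t - i)) ∈ sg ::ₘ M ∧ ¬ zc (i + 2) (sg ::ₘ M))).card ≤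
      ((Finset.range t).filter
        (fun i => (i + 2, allRight (t - i)) ∈ M ∧ ¬ zc (i + 2) M)).card := by
    apply filter_card_mono
    rintro i _ ⟨hmem, hz⟩
    refine ⟨?_, fun hzM => hz (zc_mono hzM)⟩
    rcases Multiset.mem_cons.mp hmem with he | hm
    · exfalso
      apply hz
      have : 2 ≤ sg.1 := by rw [← he]; omega
      have := hcond this
      rwa [show sg.1 = i + 2 by rw [← he]] at this
    · exact hm
  omega

lemma range_succ_zero (k : ℕ) :
    Multiset.range (k + 1) = 0 ::ₘ (Multiset.range k).map Nat.succ := by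
  have := List.range_succ_eq_map (n := k)
  simpa [Multiset.range] using congrArg (fun l : List ℕ => (l : Multiset ℕ)) this

lemma caretsL_leftComb : ∀ (k off : ℕ),
    caretsL (leftComb k) off =
      (Multiset.range k).map (fun j => (off, leftComb (k - j))) := by
  intro k
  induction k with
  | zero => intro off; simp [leftComb, caretsL]
  | succ k ih =>
      intro off
      rw [range_succ_zero, Multiset.map_cons, Multiset.map_map]
      show caretsL (node (leftComb k) leaf) off = _
      rw [caretsL]
      simp only [caretsL, add_zero, Nat.succ_sub_succ, Function.comp]
      rw [ih off]
      rfl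

lemma caretsL_allRight : ∀ (m off : ℕ),
    caretsL (allRight m) off =
      (Multiset.range m).map (fun j => (off + j, allRight (m - j))) := by
  intro m
  induction m with
  | zero => intro off; simp [allRight, caretsL]
  | succ m ih =>
      intro off
      rw [range_succ_zero, Multiset.map_cons, Multiset.map_map]
      show caretsL (node leaf (allRight m)) off = _
      rw [caretsL]
      simp only [caretsL, numLeaves, zero_add, Nat.succ_sub_succ, Function.comp,
        add_zero]
      rw [ih (off + 1)]
      congr 1
      apply Multiset.map_congr rfl
      intro j hj
      rw [show off + 1 + j = off + (j + 1) by omega]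

lemma NN_eq (t : ℕ) : NN t =
    (0, node (node leaf (leftComb t)) leaf) ::ₘ (0, node leaf (leftComb t)) ::ₘ
      (Multiset.range t).map (fun j => (1, leftComb (t - j))) := by
  show caretsR (Ttwo t) 0 = _
  unfold Ttwo
  rw [caretsR, caretsR, caretsL, caretsL]
  simp [caretsL_leftComb, caretsL, caretsR, numLeaves]

lemma mem_NN {t : ℕ} {p : ℕ × BinTree} (hp : p ∈ NN t) :
    p.1 = 1 ∨ (p.1 = 0 ∧ t + 2 ≤ numLeaves p.2) := by
  rw [NN_eq] at hp
  rcases Multiset.mem_cons.mp hp with rfl | hp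
  · right; refine ⟨rfl, ?_⟩; simp [numLeaves] <;> omega
  rcases Multiset.mem_cons.mp hp with rfl | hp
  · right; refine ⟨rfl, ?_⟩; simp [numLeaves] <;> omega
  · obtain ⟨j, _, rfl⟩ := Multiset.mem_map.mp hp
    left; rfl

lemma phi_create {t : ℕ} (sg : ℕ × BinTree) (M : Multiset (ℕ × BinTree)) :
    Phi t M ≤ Phi t (sg ::ₘ M) + 1 := by
  unfold Phi
  by_cases hbad : sg.1 = 0 ∧ 2 ≤ numLeaves sg.2 ∧ numLeaves sg.2 ≤ t + 1
  · -- creating a "bad" caret spanning [0, s-1]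
    have hnot : sg ∉ NN t := by
      intro hN
      rcases mem_NN hN with h1 | ⟨_, h2⟩
      · omega
      · omega
    have h1 : ((sg ::ₘ M) - NN t).card = (M - NN t).card + 1 := by
      rw [cons_sub_of_not_mem sg M (NN t) hnot]; simp
    have h2 : (NN t - (sg ::ₘ M)).card = (NN t - M).card := by
      rw [sub_cons_of_not_mem sg M (NN t) hnot]
    have h3 : ((Finset.range t).filter
          (fun i => (i + 2, allRight (t - i)) ∈ M ∧ ¬ zc (i + 2) M)).card ≤
        ((Finset.range t).filter
          (fun i => (i + 2, allRight (t - i)) ∈ sg ::ₘ M ∧ ¬ zc (i + 2) (sg ::ₘ M))).card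
          + 1 := by
      classical
      have hsub : ((Finset.range t).filter
            (fun i => (i + 2, allRight (t - i)) ∈ M ∧ ¬ zc (i + 2) M)) ⊆
          insert (numLeaves sg.2 - 2) ((Finset.range t).filter
            (fun i => (i + 2, allRight (t - i)) ∈ sg ::ₘ M ∧ ¬ zc (i + 2) (sg ::ₘ M))) := by
        intro i hi
        rw [Finset.mem_filter] at hi
        obtain ⟨hit, hmem, hz⟩ := hi
        by_cases hieq : i = numLeaves sg.2 - 2
        · exact Finset.mem_insert.mpr (Or.inl hieq)
        · refine Finset.mem_insert.mpr (Or.inr ?_)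
          rw [Finset.mem_filter]
          refine ⟨hit, Multiset.mem_cons_of_mem hmem, ?_⟩
          rintro ⟨V, hV, hl⟩
          rcases Multiset.mem_cons.mp hV with he | hm
          · apply hieq
            have h22 : numLeaves sg.2 = i + 2 := by rw [← he]; exact hl
            omega
          · exact hz ⟨V, hm, hl⟩
      calc ((Finset.range t).filter _).card ≤ _ := Finset.card_le_card hsub
        _ ≤ _ + 1 := Finset.card_insert_le _ _
    omega
  · -- ordinary creation
    have h1 := card_sub_le_cons_sub sg M (NN t)
    have h2 := card_sub_le_sub_cons sg M (NN t)
    have h3 : ((Finset.range t).filter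
          (fun i => (i + 2, allRight (t - i)) ∈ M ∧ ¬ zc (i + 2) M)).card ≤
        ((Finset.range t).filter
          (fun i => (i + 2, allRight (t - i)) ∈ sg ::ₘ M ∧ ¬ zc (i + 2) (sg ::ₘ M))).card := by
      apply filter_card_mono
      rintro i hi ⟨hmem, hz⟩
      refine ⟨Multiset.mem_cons_of_mem hmem, ?_⟩
      rintro ⟨V, hV, hl⟩
      rcases Multiset.mem_cons.mp hV with he | hm
      · apply hbad
        have h0 : sg.1 = 0 := by rw [← he]
        have hV2 : numLeaves sg.2 = i + 2 := by rw [← he]; exact hl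
        rw [Finset.mem_range] at hi
        omega
      · exact hz ⟨V, hm, hl⟩
    omega

lemma phi_step {t : ℕ} {T T' : BinTree} (h : RightArmStep {0, 1} T T') :
    Phi t (car T) ≤ Phi t (car T') + 1 := by
  obtain ⟨k, hk, h | h⟩ := h
  · obtain ⟨sg, he, hc⟩ := car_rotR (by simpa using hk) h
    rw [he]; exact phi_destroy sg _ (by rwa [← he])
  · obtain ⟨sg, he, _⟩ := car_rotR (by simpa using hk) h
    rw [he]; exact phi_create sg _

lemma phi_Ttwo (t : ℕ) : Phi t (car (Ttwo t)) = 0 := by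
  have hN : car (Ttwo t) = NN t := rfl
  rw [hN]
  unfold Phi
  rw [tsub_self]
  have hf : (Finset.range t).filter
      (fun i => (i + 2, allRight (t - i)) ∈ NN t ∧ ¬ zc (i + 2) (NN t)) = ∅ := by
    apply Finset.filter_false_of_mem
    rintro i _ ⟨hmem, _⟩
    rcases mem_NN hmem with h | ⟨h, _⟩ <;> simp at h
  rw [hf]
  simp

lemma car_Tone (t : ℕ) : car (Tone t) =
    (Multiset.range (t + 2)).map (fun j => (j, allRight (t + 2 - j))) := by
  show caretsR (node (allRight (t + 2)) leaf) 0 = _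
  rw [caretsR]
  simp only [caretsR, add_zero, caretsL_allRight]
  apply Multiset.map_congr rfl
  intro j hj
  simp

lemma disj_Tone (t : ℕ) : ∀ p ∈ car (Tone t), p ∉ NN t := by
  intro p hp hN
  rw [car_Tone] at hp
  obtain ⟨j, hj, rfl⟩ := Multiset.mem_map.mp hp
  rw [Multiset.mem_range] at hj
  rw [NN_eq] at hN
  rcases Multiset.mem_cons.mp hN with he | hN
  · rw [Prod.mk.injEq] at he
    obtain ⟨rfl, he2⟩ := he
    have he2' : allRight (t + 2) = node (node leaf (leftComb t)) leaf := by
      simpa using he2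
    rw [show (t + 2) = (t + 1) + 1 from rfl, allRight] at he2'
    simp at he2'
  rcases Multiset.mem_cons.mp hN with he | hN
  · rw [Prod.mk.injEq] at he
    obtain ⟨rfl, he2⟩ := he
    have h2 := congrArg numNodes he2
    simp only [numNodes_allRight, numNodes, numNodes_leftComb, Nat.sub_zero] at h2
    omega
  · obtain ⟨j', hj', he⟩ := Multiset.mem_map.mp hN
    rw [Multiset.mem_range] at hj'
    rw [Prod.mk.injEq] at he
    obtain ⟨rfl, he2⟩ := he
    have h2 := congrArg numNodes he2
    simp only [numNodes_allRight, numNodes_leftComb] at h2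
    omega

lemma phi_Tone (t : ℕ) : Phi t (car (Tone t)) = 4 * t + 4 := by
  have hd := disj_Tone t
  have hd' : ∀ p ∈ NN t, p ∉ car (Tone t) := fun p hN hc => hd p hc hN
  unfold Phi
  rw [sub_eq_self_of_disj _ _ hd, sub_eq_self_of_disj _ _ hd']
  have hc1 : (car (Tone t)).card = t + 2 := by rw [car_Tone]; simp
  have hc2 : (NN t).card = t + 2 := by rw [NN_eq]; simp
  have hf : (Finset.range t).filter
      (fun i => (i + 2, allRight (t - i)) ∈ car (Tone t) ∧
        ¬ zc (i + 2) (car (Tone t))) = Finset.range t := by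
    apply Finset.filter_true_of_mem
    intro i hi
    rw [Finset.mem_range] at hi
    constructor
    · rw [car_Tone]
      refine Multiset.mem_map.mpr ⟨i + 2, ?_, ?_⟩
      · rw [Multiset.mem_range]; omega
      · rw [show t + 2 - (i + 2) = t - i by omega]
    · rintro ⟨V, hV, hl⟩
      rw [car_Tone] at hV
      obtain ⟨j, hj, he⟩ := Multiset.mem_map.mp hV
      rw [Prod.mk.injEq] at he
      obtain ⟨rfl, rfl⟩ := he
      simp at hl
      omega
  rw [hf, hc1, hc2, Finset.card_range]
  omega

lemma chain_lower {t : ℕ} : ∀ (m : ℕ) (T : BinTree),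
    ChainLen (RightArmStep {0, 1}) m T (Ttwo t) → Phi t (car T) ≤ m := by
  intro m
  induction m with
  | zero =>
      intro T h
      cases h
      simp [phi_Ttwo]
  | succ m ih =>
      intro T h
      obtain ⟨U, hTU, hc⟩ := h
      have := phi_step (t := t) hTU
      have := ih U hc
      omega

/-! ### The explicit chain -/

abbrev RS := RightArmStep ({0, 1} : Set ℕ)

lemma step_r0 (A B C : BinTree) : RS (node (node A B) C) (node A (node B C)) :=
  ⟨0, by simp, Or.inl (RotR.root A B C)⟩

lemma step_r0' (A B C : BinTree) : RS (node A (node B C)) (node (node A B) C) :=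
  ⟨0, by simp, Or.inr (RotR.root A B C)⟩

lemma step_r1 (L A B C : BinTree) :
    RS (node L (node (node A B) C)) (node L (node A (node B C))) :=
  ⟨1, by simp, Or.inl (RotR.step L (RotR.root A B C))⟩

lemma step_r1' (L A B C : BinTree) :
    RS (node L (node A (node B C))) (node L (node (node A B) C)) :=
  ⟨1, by simp, Or.inr (RotR.step L (RotR.root A B C))⟩

lemma chain_cons {T U V : BinTree} {m : ℕ} (h : RS T U)
    (hc : ChainLen RS m U V) : ChainLen RS (m + 1) T V :=
  ⟨U, h, hc⟩

lemma chain_zero (T : BinTree) : ChainLen RS 0 T T := rfl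

lemma chain_append {a b : ℕ} : ∀ {T U V : BinTree},
    ChainLen RS a T U → ChainLen RS b U V → ChainLen RS (a + b) T V := by
  induction a with
  | zero => intro T U V h h'; cases h; simpa using h'
  | succ a ih =>
      intro T U V h h'
      obtain ⟨W, hTW, hc⟩ := h
      have : ChainLen RS (a + b) W V := ih hc h'
      rw [show a + 1 + b = (a + b) + 1 by omega]
      exact chain_cons hTW this

def Pst (k m : ℕ) : BinTree :=
  node leaf (node (leftComb k) (node (allRight m) leaf))

lemma chain_loop : ∀ m k, ChainLen RS (4 * m) (Pst k m) (Pst (k + m) 0) := by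
  intro m
  induction m with
  | zero => intro k; rfl
  | succ m ih =>
      intro k
      have s1 : RS (Pst k (m + 1))
          (node (node leaf (leftComb k)) (node (allRight (m + 1)) leaf)) :=
        step_r0' _ _ _
      have s2 : RS (node (node leaf (leftComb k)) (node (allRight (m + 1)) leaf))
          (node (node leaf (leftComb k)) (node leaf (node (allRight m) leaf))) :=
        step_r1 _ _ _ _
      have s3 : RS (node (node leaf (leftComb k)) (node leaf (node (allRight m) leaf)))
          (node leaf (node (leftComb k) (node leaf (node (allRight m) leaf)))) :=
        step_r0 _ _ _
      have s4 : RS (node leaf (node (leftComb k) (node leaf (node (allRight m) leaf))))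
          (Pst (k + 1) m) :=
        step_r1' _ _ _ _
      have hc : ChainLen RS (4 * m + 4) (Pst k (m + 1)) (Pst (k + 1 + m) 0) :=
        chain_cons s1 (chain_cons s2 (chain_cons s3 (chain_cons s4 (ih (k + 1)))))
      rw [show k + (m + 1) = k + 1 + m by omega, show 4 * (m + 1) = 4 * m + 4 by omega]
      exact hc

lemma chain_main (t : ℕ) : ChainLen RS (4 * t + 4) (Tone t) (Ttwo t) := by
  have c1 : RS (Tone t) (node leaf (node (allRight (t + 1)) leaf)) :=
    step_r0 _ _ _
  have c2 : RS (node leaf (node (allRight (t + 1)) leaf)) (Pst 0 t) :=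
    step_r1 _ _ _ _
  have c3 : RS (Pst t 0) (node (node leaf (leftComb t)) (node leaf leaf)) :=
    step_r0' _ _ _
  have c4 : RS (node (node leaf (leftComb t)) (node leaf leaf)) (Ttwo t) :=
    step_r0' _ _ _
  have hl := chain_loop t 0
  rw [show (0 + t) = t by omega] at hl
  have full := chain_cons c1 (chain_cons c2
    (chain_append hl (chain_cons c3 (chain_cons c4 (chain_zero (Ttwo t))))))
  rw [show 4 * t + 4 = 4 * t + (0 + 1 + 1) + 1 + 1 by omega]
  exact full

end RRD

theorem restricted_rotation_distance_sharp (n : ℕ) (hn : 3 ≤ n) :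
    ∃ T1 T2 : BinTree, T1.numNodes = n ∧ T2.numNodes = n ∧
      Reachable (RightArmStep {0, 1}) T1 T2 ∧
      stepDist (RightArmStep {0, 1}) T1 T2 = 4 * n - 8 := by
  obtain ⟨t, rfl⟩ : ∃ t, n = t + 3 := ⟨n - 3, by omega⟩
  refine ⟨RRD.Tone t, RRD.Ttwo t, ?_, ?_, ?_, ?_⟩
  · simp [RRD.Tone, numNodes]
  · simp [RRD.Ttwo, numNodes]
  · exact ⟨4 * t + 4, RRD.chain_main t⟩
  · have hm : 4 * t + 4 ∈ {m | ChainLen (RightArmStep {0, 1}) m (RRD.Tone t) (RRD.Ttwo t)} :=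
      RRD.chain_main t
    have hub : stepDist (RightArmStep {0, 1}) (RRD.Tone t) (RRD.Ttwo t) ≤ 4 * t + 4 :=
      Nat.sInf_le hm
    have hlb : 4 * t + 4 ≤ stepDist (RightArmStep {0, 1}) (RRD.Tone t) (RRD.Ttwo t) := by
      refine le_csInf ⟨_, hm⟩ ?_
      intro m hmem
      have := RRD.chain_lower (t := t) m _ hmem
      rw [RRD.phi_Tone] at this
      omega
    have : stepDist (RightArmStep {0, 1}) (RRD.Tone t) (RRD.Ttwo t) = 4 * t + 4 :=
      le_antisymm hub hlb
    rw [this]; omega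
end

section
/- Let S = {x_0, x_{i_1}, …, x_{i_L}} with 0 < i_1 < i_2 < ⋯ < i_L, and let T1 and T2 be trees with the same number of interior nodes such that the pair (T1,T2) is reduced, representing the element w of Thompson's group F. Then the restricted right-arm rotation distance d_RRA^S(T1,T2) is defined if and only if no generator x_t or x_t⁻¹ with 1 ≤ t ≤ i_1 − 1 occurs in the reduced normal form of w. -/
open BinTree

open BinTree

namespace RRA

/-- left spine length -/
def lsp : BinTree → ℕ
  | BinTree.leaf => 0
  | BinTree.node L _ => lsp L + 1

lemma numLeaves_pos (T : BinTree) : 0 < T.numLeaves := by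
  induction T with
  | leaf => simp [numLeaves]
  | node L R ihL ihR => simp [numLeaves]; omega

lemma incFirst_length (l : List ℕ) : (incFirst l).length = l.length := by
  cases l <;> simp [incFirst]

lemma lexps_length (L : BinTree) : (lexps L).length = L.numLeaves := by
  induction L with
  | leaf => simp [lexps, numLeaves]
  | node A B ihA ihB => simp [lexps, numLeaves, incFirst_length, ihA, ihB]

lemma exps_length (T : BinTree) : (exps T).length = T.numLeaves := by
  induction T with
  | leaf => simp [exps, numLeaves]
  | node A B ihA ihB => simp [exps, numLeaves, lexps_length, ihB]

lemma lexps_eq (L : BinTree) : ∃ as, lexps L = lsp L :: as := by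
  induction L with
  | leaf => exact ⟨[], rfl⟩
  | node A B ihA ihB =>
    obtain ⟨as, ha⟩ := ihA
    exact ⟨as ++ lexps B, by simp [lexps, ha, incFirst, lsp]⟩

lemma lexps_head (L : BinTree) : (lexps L).getD 0 0 = lsp L := by
  obtain ⟨as, ha⟩ := lexps_eq L; simp [ha]

lemma lsp_eq_zero {L : BinTree} (h : lsp L = 0) : L = BinTree.leaf := by
  cases L with
  | leaf => rfl
  | node A B => simp [lsp] at h

lemma lexps_last (L : BinTree) : (lexps L).getD (L.numLeaves - 1) 0 = 0 := by
  induction L with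
  | leaf => simp [lexps, numLeaves]
  | node A B ihA ihB =>
    have hA := numLeaves_pos A
    have hB := numLeaves_pos B
    have hlen : (incFirst (lexps A)).length = A.numLeaves := by
      simp [incFirst_length, lexps_length]
    have h1 : A.numLeaves ≤ (BinTree.node A B).numLeaves - 1 := by
      simp [numLeaves]; omega
    rw [show lexps (BinTree.node A B) = incFirst (lexps A) ++ lexps B from rfl,
      List.getD_append_right _ _ _ _ (by omega)]
    have : (BinTree.node A B).numLeaves - 1 - (incFirst (lexps A)).length
        = B.numLeaves - 1 := by
      simp [numLeaves] at *; omega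
    rw [this]; exact ihB

lemma getD_out {l : List ℕ} {n : ℕ} (h : l.length ≤ n) : l.getD n 0 = 0 :=
  List.getD_eq_default _ _ h

end RRA

namespace RRA

/-- A right rotation at right-arm level `k` changes exactly one entry of `exps`,
at a position `p ≥ k`; moreover if `k ≥ 1` the preceding entry is `0`. -/
lemma rot_exps {k : ℕ} {T T' : BinTree} (h : RotR k T T') :
    ∃ p, (∀ t, t ≠ p → (exps T).getD t 0 = (exps T').getD t 0) ∧
      ((p = 0 ∧ k = 0) ∨ (1 ≤ k ∧ k ≤ p ∧ (exps T).getD (p - 1) 0 = 0)) := by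
  induction h with
  | root A B C =>
    refine ⟨0, ?_, Or.inl ⟨rfl, rfl⟩⟩
    intro t ht
    obtain ⟨s, rfl⟩ := Nat.exists_eq_succ_of_ne_zero ht
    obtain ⟨as, ha⟩ := lexps_eq A
    show ((lexps (BinTree.node A B)) ++ exps C).getD (s+1) 0
        = (lexps A ++ exps (BinTree.node B C)).getD (s+1) 0
    rw [show lexps (BinTree.node A B) = incFirst (lexps A) ++ lexps B from rfl,
      show exps (BinTree.node B C) = lexps B ++ exps C from rfl, ha]
    simp [incFirst]
  | @step k R R' L h ih =>
    obtain ⟨p, hprev, hd⟩ := ih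
    have hlen : (lexps L).length = L.numLeaves := lexps_length L
    have hLpos : 0 < L.numLeaves := numLeaves_pos L
    refine ⟨L.numLeaves + p, ?_, Or.inr ⟨by omega, ?_, ?_⟩⟩
    · intro t ht
      show (lexps L ++ exps R).getD t 0 = (lexps L ++ exps R').getD t 0
      rcases lt_or_ge t (lexps L).length with hlt | hge
      · rw [List.getD_append _ _ _ _ hlt, List.getD_append _ _ _ _ hlt]
      · rw [List.getD_append_right _ _ _ _ hge, List.getD_append_right _ _ _ _ hge]
        exact hprev _ (by omega)
    · rcases hd with ⟨rfl, rfl⟩ | ⟨h1, h2, _⟩ <;> omega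
    · show (lexps L ++ exps R).getD (L.numLeaves + p - 1) 0 = 0
      rcases hd with ⟨rfl, rfl⟩ | ⟨h1, h2, h3⟩
      · rw [List.getD_append _ _ _ _ (by omega)]
        simpa using lexps_last L
      · rw [List.getD_append_right _ _ _ _ (by omega),
          show L.numLeaves + p - 1 - (lexps L).length = p - 1 by omega]
        exact h3

lemma sib_left {L : BinTree} (R : BinTree) {k : ℕ} (h : SibPair L k) :
    SibPair (BinTree.node L R) k := by
  cases L with
  | leaf => exact absurd h (by simp [SibPair])
  | node A B =>
    cases R with
    | leaf => exact Or.inl h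
    | node C D => exact Or.inl h

lemma sib_right (L : BinTree) {R : BinTree} {j : ℕ} (h : SibPair R j) :
    SibPair (BinTree.node L R) (L.numLeaves + j) := by
  cases R with
  | leaf => exact absurd h (by simp [SibPair])
  | node C D =>
    cases L with
    | leaf => exact Or.inr ⟨j, h, rfl⟩
    | node A B => exact Or.inr ⟨j, h, rfl⟩

end RRA

namespace RRA

lemma sib_lexps : ∀ (L : BinTree) (t : ℕ), (lexps L).getD t 0 ≠ 0 →
    (lexps L).getD (t + 1) 0 = 0 → SibPair L t := by
  intro L
  induction L with
  | leaf =>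
    intro t h1 _
    exact absurd (by cases t <;> simp [lexps]) h1
  | node A B ihA ihB =>
    intro t h1 h2
    obtain ⟨as, ha⟩ := lexps_eq A
    have hlenA : as.length + 1 = A.numLeaves := by
      have := lexps_length A; rw [ha] at this; simpa using this
    have hform : lexps (BinTree.node A B) = (lsp A + 1) :: (as ++ lexps B) := by
      simp [lexps, ha, incFirst]
    rw [hform] at h1 h2
    cases t with
    | zero =>
      cases A with
      | leaf =>
        have : as = [] := by
          have h1' : (BinTree.leaf).numLeaves = 1 := rfl
          rw [h1'] at hlenA
          exact List.eq_nil_of_length_eq_zero (by omega)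
        subst this
        simp at h2
        have hB : B = BinTree.leaf := lsp_eq_zero (by rw [← lexps_head B]; simpa using h2)
        subst hB
        simp [SibPair]
      | node A1 A2 =>
        have hAlen : 1 ≤ as.length := by
          have := numLeaves_pos A1; have := numLeaves_pos A2
          simp [numLeaves] at hlenA; omega
        apply sib_left
        apply ihA 0
        · rw [ha]; simp [lsp]
        · rw [ha]
          simp only [List.getD_cons_succ]
          have := h2
          simp only [List.getD_cons_succ] at this
          rw [List.getD_append as (lexps B) 0 0 (by omega)] at this
          exact this
    | succ s =>
      simp only [List.getD_cons_succ] at h1 h2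
      rcases lt_or_ge s as.length with hs | hs
      · -- inside A
        rw [List.getD_append _ _ _ _ hs] at h1
        apply sib_left
        apply ihA (s + 1)
        · rw [ha]; simpa using h1
        · rw [ha]
          simp only [List.getD_cons_succ]
          rcases lt_or_ge (s+1) as.length with hs1 | hs1
          · rw [List.getD_append _ _ _ _ hs1] at h2; exact h2
          · exact getD_out (by omega)
      · -- inside B
        rw [List.getD_append_right _ _ _ _ hs] at h1
        rw [List.getD_append_right _ _ _ _ (by omega)] at h2
        have harith : s + 1 - as.length = s - as.length + 1 := by omega
        rw [harith] at h2
        have hsib := ihB _ h1 h2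
        have := sib_right A hsib
        have ht : s + 1 = A.numLeaves + (s - as.length) := by omega
        rw [ht]; exact this

lemma sib_exps : ∀ (T : BinTree) (t : ℕ), (exps T).getD t 0 ≠ 0 →
    (exps T).getD (t + 1) 0 = 0 → SibPair T t := by
  intro T
  induction T with
  | leaf =>
    intro t h1 _
    exact absurd (by cases t <;> simp [exps]) h1
  | node L R ihL ihR =>
    intro t h1 h2
    have hlen : (lexps L).length = L.numLeaves := lexps_length L
    show SibPair (BinTree.node L R) t
    have hform : exps (BinTree.node L R) = lexps L ++ exps R := rfl
    rw [hform] at h1 h2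
    rcases lt_or_ge t (lexps L).length with ht | ht
    · rw [List.getD_append _ _ _ _ ht] at h1
      apply sib_left
      apply sib_lexps L t h1
      rcases lt_or_ge (t+1) (lexps L).length with ht1 | ht1
      · rw [List.getD_append _ _ _ _ ht1] at h2; exact h2
      · exact getD_out (by omega)
    · rw [List.getD_append_right _ _ _ _ ht] at h1
      rw [List.getD_append_right _ _ _ _ (by omega)] at h2
      rw [show t + 1 - (lexps L).length = t - (lexps L).length + 1 by omega] at h2
      have := sib_right L (ihR _ h1 h2)
      rw [show t = L.numLeaves + (t - (lexps L).length) by omega]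
      exact this

end RRA

namespace RRA

lemma chain_trans {r : BinTree → BinTree → Prop} :
    ∀ {n k : ℕ} {A B C : BinTree}, ChainLen r n A B → ChainLen r k B C →
      ChainLen r (n + k) A C := by
  intro n
  induction n with
  | zero => intro k A B C h1 h2; cases h1; simpa using h2
  | succ n ih =>
    intro k A B C h1 h2
    obtain ⟨U, hU, hch⟩ := h1
    have he : n + 1 + k = (n + k) + 1 := by omega
    rw [he]
    exact ⟨U, hU, ih hch h2⟩

lemma reach_refl {r : BinTree → BinTree → Prop} (T : BinTree) : Reachable r T T :=
  ⟨0, rfl⟩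

lemma reach_single {r : BinTree → BinTree → Prop} {T U : BinTree} (h : r T U) :
    Reachable r T U := ⟨1, U, h, rfl⟩

lemma reach_trans {r : BinTree → BinTree → Prop} {A B C : BinTree}
    (h1 : Reachable r A B) (h2 : Reachable r B C) : Reachable r A C := by
  obtain ⟨n, hn⟩ := h1; obtain ⟨k, hk⟩ := h2; exact ⟨n + k, chain_trans hn hk⟩

lemma chain_snoc {r : BinTree → BinTree → Prop} :
    ∀ {n : ℕ} {A B C : BinTree}, ChainLen r n A B → r B C → ChainLen r (n + 1) A C := by
  intro n
  induction n with
  | zero => intro A B C h1 h2; cases h1; exact ⟨C, h2, rfl⟩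
  | succ n ih =>
    intro A B C h1 h2
    obtain ⟨U, hU, hch⟩ := h1
    exact ⟨U, hU, ih hch h2⟩

lemma chain_symm {r : BinTree → BinTree → Prop} (hs : ∀ A B, r A B → r B A) :
    ∀ {n : ℕ} {A B : BinTree}, ChainLen r n A B → ChainLen r n B A := by
  intro n
  induction n with
  | zero => intro A B h; exact h.symm
  | succ n ih =>
    intro A B h
    obtain ⟨U, hU, hch⟩ := h
    exact chain_snoc (ih hch) (hs _ _ hU)

lemma ras_symm {S : Set ℕ} {A B : BinTree} (h : RightArmStep S A B) : RightArmStep S B A := by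
  obtain ⟨k, hk, h | h⟩ := h
  exacts [⟨k, hk, Or.inr h⟩, ⟨k, hk, Or.inl h⟩]

lemma reach_symm {S : Set ℕ} {A B : BinTree} (h : Reachable (RightArmStep S) A B) :
    Reachable (RightArmStep S) B A := by
  obtain ⟨n, hn⟩ := h
  exact ⟨n, chain_symm (fun _ _ => ras_symm) hn⟩

/-- single step of the restricted relation preserves entries `1..u+1` of `exps`,
provided entries `m-1..u` of the source are nonzero. -/
lemma run_step {S : Set ℕ} {m u : ℕ} (hm : 2 ≤ m) (hlev : ∀ k ∈ S, k = 0 ∨ m ≤ k)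
    {T U : BinTree} (h : RightArmStep S T U)
    (hrun : ∀ s, m - 1 ≤ s → s ≤ u → (exps T).getD s 0 ≠ 0) :
    ∀ t, 1 ≤ t → t ≤ u + 1 → (exps T).getD t 0 = (exps U).getD t 0 := by
  obtain ⟨k, hk, hrot⟩ := h
  have key : ∃ p, (∀ t, t ≠ p → (exps T).getD t 0 = (exps U).getD t 0) ∧
      ((p = 0 ∧ k = 0) ∨ (1 ≤ k ∧ k ≤ p ∧ (exps T).getD (p - 1) 0 = 0)) := by
    rcases hrot with h | h
    · exact rot_exps h
    · obtain ⟨p, hp, hd⟩ := rot_exps h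
      refine ⟨p, fun t ht => (hp t ht).symm, ?_⟩
      rcases hd with ⟨h1, h2⟩ | ⟨h1, h2, h3⟩
      · exact Or.inl ⟨h1, h2⟩
      · refine Or.inr ⟨h1, h2, ?_⟩
        rw [hp (p - 1) (by omega)] at h3
        exact h3
  obtain ⟨p, hp, hd⟩ := key
  intro t ht1 ht2
  apply hp
  rcases hlev k hk with rfl | hk'
  · rcases hd with ⟨rfl, _⟩ | ⟨h1, _, _⟩
    · omega
    · omega
  · rcases hd with ⟨_, rfl⟩ | ⟨_, h2, h3⟩
    · omega
    · -- p ≥ k ≥ m; if t = p ≤ u + 1 then p - 1 ∈ [m-1, u] has nonzero entry, contra h3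
      intro heq
      exact hrun (p - 1) (by omega) (by omega) h3

lemma run_chain {S : Set ℕ} {m u : ℕ} (hm : 2 ≤ m) (hlev : ∀ k ∈ S, k = 0 ∨ m ≤ k) :
    ∀ {n : ℕ} {T T' : BinTree}, ChainLen (RightArmStep S) n T T' →
      (∀ s, m - 1 ≤ s → s ≤ u → (exps T).getD s 0 ≠ 0) →
      ∀ t, 1 ≤ t → t ≤ u + 1 → (exps T).getD t 0 = (exps T').getD t 0 := by
  intro n
  induction n with
  | zero => intro T T' h _ t _ _; cases h; rfl
  | succ n ih =>
    intro T T' h hrun t ht1 ht2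
    obtain ⟨U, hU, hch⟩ := h
    have hstep := run_step hm hlev hU hrun
    have hrunU : ∀ s, m - 1 ≤ s → s ≤ u → (exps U).getD s 0 ≠ 0 := by
      intro s hs1 hs2
      rw [← hstep s (by omega) (by omega)]
      exact hrun s hs1 hs2
    rw [hstep t ht1 ht2]
    exact ih hch hrunU t ht1 ht2

end RRA

namespace RRA

def comb : ℕ → BinTree → BinTree
  | 0, R => R
  | i + 1, R => BinTree.node BinTree.leaf (comb i R)

def graft : BinTree → BinTree → BinTree
  | BinTree.leaf, C => C
  | BinTree.node A B, C => graft A (BinTree.node B C)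

lemma comb_allRight (i r : ℕ) : comb i (allRight r) = allRight (i + r) := by
  induction i with
  | zero => simp [comb]
  | succ i ih => rw [show i + 1 + r = (i + r) + 1 by omega]; simp [comb, allRight, ih]

lemma comb_node_leaf (i : ℕ) (R : BinTree) :
    comb i (BinTree.node BinTree.leaf R) = comb (i + 1) R := by
  induction i with
  | zero => rfl
  | succ i ih => simp [comb, ih]

lemma numNodes_comb (i : ℕ) (R : BinTree) : (comb i R).numNodes = i + R.numNodes := by
  induction i with
  | zero => simp [comb]
  | succ i ih => simp [comb, numNodes, ih]; omega

lemma numNodes_graft : ∀ (L C : BinTree), (graft L C).numNodes = L.numNodes + C.numNodes := by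
  intro L
  induction L with
  | leaf => intro C; simp [graft, numNodes]
  | node A B ihA ihB =>
    intro C
    rw [show graft (BinTree.node A B) C = graft A (BinTree.node B C) from rfl, ihA]
    simp [numNodes]; omega

lemma rotR_comb {k : ℕ} {R R' : BinTree} (h : RotR k R R') :
    ∀ i, RotR (i + k) (comb i R) (comb i R') := by
  intro i
  induction i with
  | zero => simpa [comb] using h
  | succ i ih =>
    rw [show i + 1 + k = (i + k) + 1 by omega]
    exact RotR.step _ ih

/-- simulation: a rotation at level `g ≥ m'` of `W` can be performed inside
`node X W` using rotations at right-arm levels `0` and `m'+1` only. -/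
lemma lemC {S : Set ℕ} {m' : ℕ} (h0 : (0 : ℕ) ∈ S) (hm : m' + 1 ∈ S) :
    ∀ g, m' ≤ g → ∀ W W' X, RotR g W W' →
      Reachable (RightArmStep S) (BinTree.node X W) (BinTree.node X W') := by
  intro g
  induction g using Nat.strong_induction_on with
  | _ g ih =>
    intro hg W W' X h
    rcases eq_or_lt_of_le hg with heq | hlt
    · -- direct: rotation at level m'+1
      subst heq
      exact reach_single ⟨m' + 1, hm, Or.inl (RotR.step X h)⟩
    · -- g ≥ m' + 1 ≥ 1 : peel one level
      obtain ⟨g', rfl⟩ : ∃ g', g = g' + 1 := ⟨g - 1, by omega⟩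
      cases h with
      | step Y h' =>
        rename_i Z Z'
        have s1 : RightArmStep S (BinTree.node X (BinTree.node Y Z))
            (BinTree.node (BinTree.node X Y) Z) :=
          ⟨0, h0, Or.inr (RotR.root X Y Z)⟩
        have s3 : RightArmStep S (BinTree.node (BinTree.node X Y) Z')
            (BinTree.node X (BinTree.node Y Z')) :=
          ⟨0, h0, Or.inl (RotR.root X Y Z')⟩
        exact reach_trans (reach_single s1)
          (reach_trans (ih g' (by omega) (by omega) Z Z' (BinTree.node X Y) h')
            (reach_single s3))

lemma reach_comb_of_RA {S : Set ℕ} {m' : ℕ} (h0 : (0 : ℕ) ∈ S) (hm : m' + 1 ∈ S)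
    {R R' : BinTree} (h : Reachable RAStep R R') :
    Reachable (RightArmStep S) (comb (m' + 1) R) (comb (m' + 1) R') := by
  obtain ⟨n, hn⟩ := h
  induction n generalizing R with
  | zero => cases hn; exact reach_refl _
  | succ n ih =>
    obtain ⟨U, hU, hch⟩ := hn
    have hstep : Reachable (RightArmStep S) (comb (m' + 1) R) (comb (m' + 1) U) := by
      obtain ⟨k, hrot | hrot⟩ := hU
      · exact lemC h0 hm (m' + k) (by omega) _ _ _ (rotR_comb hrot m')
      · exact reach_symm (lemC h0 hm (m' + k) (by omega) _ _ _ (rotR_comb hrot m'))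
    exact reach_trans hstep (ih hch)

lemma reach_graft {r : BinTree → BinTree → Prop}
    (hroot : ∀ A B C, r (BinTree.node (BinTree.node A B) C) (BinTree.node A (BinTree.node B C))) :
    ∀ (L C : BinTree), Reachable r (BinTree.node L C) (BinTree.node BinTree.leaf (graft L C)) := by
  intro L
  induction L with
  | leaf => intro C; exact reach_refl _
  | node A B ihA ihB =>
    intro C
    exact reach_trans (reach_single (hroot A B C)) (ihA (BinTree.node B C))

lemma incFirst_tail {l : List ℕ} (hl : l ≠ []) (y : List ℕ) :
    (incFirst l ++ y).tail = (l ++ y).tail := by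
  cases l with
  | nil => exact absurd rfl hl
  | cons a as => simp [incFirst]

lemma lexps_ne_nil (L : BinTree) : lexps L ≠ [] := by
  have h1 := lexps_length L
  have h2 := numLeaves_pos L
  intro h; rw [h] at h1; simp at h1; omega

lemma exps_tail_graft : ∀ (L C : BinTree),
    (exps (BinTree.node L C)).tail = (exps (BinTree.node BinTree.leaf (graft L C))).tail := by
  intro L
  induction L with
  | leaf => intro C; rfl
  | node A B ihA ihB =>
    intro C
    have h1 : (exps (BinTree.node (BinTree.node A B) C)).tail
        = (exps (BinTree.node A (BinTree.node B C))).tail := by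
      show ((incFirst (lexps A) ++ lexps B) ++ exps C).tail
          = (lexps A ++ (lexps B ++ exps C)).tail
      rw [List.append_assoc]
      exact incFirst_tail (lexps_ne_nil A) _
    rw [h1]
    exact ihA (BinTree.node B C)

lemma reach_node_left_RA {R R' : BinTree} (X : BinTree) (h : Reachable RAStep R R') :
    Reachable RAStep (BinTree.node X R) (BinTree.node X R') := by
  obtain ⟨n, hn⟩ := h
  refine ⟨n, ?_⟩
  induction n generalizing R with
  | zero => cases hn; rfl
  | succ n ih =>
    obtain ⟨U, hU, hch⟩ := hn
    obtain ⟨k, hrot | hrot⟩ := hU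
    · exact ⟨BinTree.node X U, ⟨k + 1, Or.inl (RotR.step X hrot)⟩, ih hch⟩
    · exact ⟨BinTree.node X U, ⟨k + 1, Or.inr (RotR.step X hrot)⟩, ih hch⟩

lemma reach_allRight_RA : ∀ (n : ℕ) (T : BinTree), T.numNodes = n →
    Reachable RAStep T (allRight n) := by
  intro n
  induction n using Nat.strong_induction_on with
  | _ n ih =>
    intro T hT
    cases T with
    | leaf =>
      cases hT
      exact reach_refl _
    | node L C =>
      have hroot : ∀ A B C', RAStep (BinTree.node (BinTree.node A B) C')
          (BinTree.node A (BinTree.node B C')) := fun A B C' => ⟨0, Or.inl (RotR.root A B C')⟩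
      have h1 := reach_graft hroot L C
      have hnum : (graft L C).numNodes = n - 1 := by
        rw [numNodes_graft]
        simp [numNodes] at hT
        omega
      have hn1 : 1 ≤ n := by simp [numNodes] at hT; omega
      have h2 := ih (n - 1) (by omega) (graft L C) hnum
      have h3 := reach_node_left_RA BinTree.leaf h2
      have : allRight n = BinTree.node BinTree.leaf (allRight (n - 1)) := by
        obtain ⟨n', rfl⟩ : ∃ n', n = n' + 1 := ⟨n - 1, by omega⟩
        simp [allRight]
      rw [this]
      exact reach_trans h1 h3

end RRA

namespace RRA

lemma numNodes_allRight : ∀ r, (allRight r).numNodes = r := by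
  intro r; induction r with
  | zero => rfl
  | succ r ih => simp [allRight, numNodes, ih]

lemma exps_node_head (L R : BinTree) : (exps (BinTree.node L R)).getD 0 0 = lsp L := by
  show (lexps L ++ exps R).getD 0 0 = lsp L
  rw [List.getD_append _ _ _ _ (by rw [lexps_length]; exact numLeaves_pos L)]
  exact lexps_head L

lemma exps_node_leaf (R : BinTree) :
    exps (BinTree.node BinTree.leaf R) = 0 :: exps R := rfl

/-- normalization below a comb: if the first `d` entries of `exps R` vanish and
`i + d = m' + 1`, then `comb i R` reaches the all-right tree. -/
lemma reach_comb_allRight {S : Set ℕ} {m' : ℕ} (h0 : (0 : ℕ) ∈ S) (hm : m' + 1 ∈ S) :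
    ∀ (d i : ℕ) (R : BinTree), i + d = m' + 1 →
      (∀ t, t < d → (exps R).getD t 0 = 0) →
      Reachable (RightArmStep S) (comb i R) (allRight (comb i R).numNodes) := by
  intro d
  induction d with
  | zero =>
    intro i R hi hv
    obtain rfl : i = m' + 1 := by omega
    have h1 := reach_allRight_RA R.numNodes R rfl
    have h2 := reach_comb_of_RA h0 hm h1
    rw [comb_allRight] at h2
    rw [numNodes_comb]
    exact h2
  | succ d ihd =>
    intro i R hi hv
    cases R with
    | leaf =>
      have har : comb i BinTree.leaf = allRight i := by
        have := comb_allRight i 0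
        simpa [allRight] using this
      rw [har, numNodes_allRight]
      exact reach_refl _
    | node L R1 =>
      have hL : L = BinTree.leaf := by
        apply lsp_eq_zero
        rw [← exps_node_head L R1]
        exact hv 0 (by omega)
      subst hL
      have hv1 : ∀ t, t < d → (exps R1).getD t 0 = 0 := by
        intro t ht
        have := hv (t + 1) (by omega)
        rwa [exps_node_leaf, List.getD_cons_succ] at this
      have := ihd (i + 1) R1 (by omega) hv1
      rwa [← comb_node_leaf] at this

/-- main backward lemma : a tree whose exps vanish on `[1, m'-? ]` reaches allRight. -/
lemma reach_allRight_S {S : Set ℕ} {m' : ℕ} (h0 : (0 : ℕ) ∈ S) (hm : m' + 1 ∈ S)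
    (T : BinTree) (hT : ∀ t, 1 ≤ t → t ≤ m' → (exps T).getD t 0 = 0) :
    Reachable (RightArmStep S) T (allRight T.numNodes) := by
  cases T with
  | leaf => exact reach_refl _
  | node L C =>
    have hroot : ∀ A B C', RightArmStep S (BinTree.node (BinTree.node A B) C')
        (BinTree.node A (BinTree.node B C')) :=
      fun A B C' => ⟨0, h0, Or.inl (RotR.root A B C')⟩
    have h1 := reach_graft hroot L C
    set R := graft L C with hR
    -- vanishing condition for R
    have htail := exps_tail_graft L C
    have hexps_ne : exps (BinTree.node L C) ≠ [] := by
      have h1' := exps_length (BinTree.node L C)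
      have h2' := numLeaves_pos (BinTree.node L C)
      intro h; rw [h] at h1'; simp at h1'; omega
    have hgetD : ∀ t, (exps (BinTree.node L C)).getD (t + 1) 0 = (exps R).getD t 0 := by
      intro t
      obtain ⟨a, l, hl⟩ : ∃ a l, exps (BinTree.node L C) = a :: l := by
        cases h : exps (BinTree.node L C) with
        | nil => exact absurd h hexps_ne
        | cons a l => exact ⟨a, l, rfl⟩
      have : (exps (BinTree.node BinTree.leaf R)).tail = exps R := by
        rw [exps_node_leaf]; rfl
      rw [hl, List.getD_cons_succ, show l = (exps (BinTree.node L C)).tail by rw [hl]; rfl,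
        htail, this]
    have hvR : ∀ t, t < m' → (exps R).getD t 0 = 0 := by
      intro t ht
      rw [← hgetD t]
      exact hT (t + 1) (by omega) (by omega)
    have h2 := reach_comb_allRight h0 hm m' 1 R (by omega) hvR
    have hc1 : comb 1 R = BinTree.node BinTree.leaf R := rfl
    rw [hc1] at h2
    have hnum : (BinTree.node BinTree.leaf R).numNodes = (BinTree.node L C).numNodes := by
      simp [numNodes, hR, numNodes_graft]
    rw [hnum] at h2
    exact reach_trans h1 h2

end RRA


open RRA

theorem rra_defined_iff_reduced (I : Finset ℕ) (hpos : ∀ k ∈ I, 0 < k) (hne : I.Nonempty)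
    (T1 T2 : BinTree) (hn : T1.numNodes = T2.numNodes) (hred : ReducedPair T1 T2) :
    Reachable (RightArmStep (insert 0 (I : Set ℕ))) T1 T2 ↔
      ∀ t, 1 ≤ t → t ≤ I.min' hne - 1 →
        (exps T1).getD t 0 = 0 ∧ (exps T2).getD t 0 = 0 := by
  set m := I.min' hne with hmdef
  have hm1 : 1 ≤ m := hpos _ (I.min'_mem hne)
  obtain ⟨m', hm'⟩ : ∃ m', m = m' + 1 := ⟨m - 1, by omega⟩
  have h0 : (0 : ℕ) ∈ (insert 0 (I : Set ℕ)) := Set.mem_insert _ _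
  have hmS : m ∈ insert 0 (I : Set ℕ) :=
    Set.mem_insert_of_mem _ (by exact_mod_cast I.min'_mem hne)
  constructor
  · rintro ⟨n, hch⟩ t ht1 htm
    have hm2 : 2 ≤ m := by omega
    have hlev : ∀ k ∈ insert 0 (I : Set ℕ), k = 0 ∨ m ≤ k := by
      rintro k (rfl | hk)
      · exact Or.inl rfl
      · exact Or.inr (I.min'_le k (by exact_mod_cast hk))
    have freeze : ∀ s, 1 ≤ s → s ≤ m - 1 →
        (exps T1).getD s 0 = (exps T2).getD s 0 := by
      intro s hs1 hs2
      exact run_chain (u := m - 2) hm2 hlev hch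
        (fun s' h1 h2 => absurd (le_trans h1 h2) (by omega)) s hs1 (by omega)
    by_contra hc
    have hT1t : (exps T1).getD t 0 ≠ 0 := by
      intro hz
      exact hc ⟨hz, by rw [← freeze t ht1 htm]; exact hz⟩
    clear hc
    by_cases hcase : (exps T1).getD (m - 1) 0 = 0
    · -- Case A : maximal nonzero index below m-1
      set P := fun s => (exps T1).getD s 0 ≠ 0 with hP
      haveI : DecidablePred P := Classical.decPred P
      have htm2 : t ≤ m - 2 := by
        rcases eq_or_lt_of_le htm with heq | _
        · exact absurd (heq ▸ hcase) hT1t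
        · omega
      set ts := Nat.findGreatest P (m - 2) with hts
      have hPts : P ts := Nat.findGreatest_spec htm2 hT1t
      have htsge : t ≤ ts := Nat.le_findGreatest htm2 hT1t
      have htsle : ts ≤ m - 2 := Nat.findGreatest_le _
      have hnext : (exps T1).getD (ts + 1) 0 = 0 := by
        rcases lt_or_ge (m - 2) (ts + 1) with hgt | hle
        · have : ts + 1 = m - 1 := by omega
          rw [this]; exact hcase
        · have := Nat.findGreatest_is_greatest (lt_add_one ts) hle
          simpa [hP] using this
      have hs1 : SibPair T1 ts := sib_exps T1 ts hPts hnext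
      have hs2 : SibPair T2 ts := by
        apply sib_exps T2 ts
        · rw [← freeze ts (by omega) (by omega)]; exact hPts
        · rw [← freeze (ts + 1) (by omega) (by omega)]; exact hnext
      exact hred ⟨ts, hs1, hs2⟩
    · -- Case B : run of nonzero entries starting at m-1
      set Z := fun s => m - 1 ≤ s ∧ (exps T1).getD s 0 = 0 with hZ
      haveI : DecidablePred Z := Classical.decPred Z
      have hlen : m - 1 < (exps T1).length := by
        by_contra hcon
        exact hcase (getD_out (by omega))
      have hZex : ∃ s, Z s := ⟨(exps T1).length, by omega, getD_out le_rfl⟩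
      set z := Nat.find hZex with hz
      have hZz : Z z := Nat.find_spec hZex
      have hzgt : m - 1 < z := by
        rcases eq_or_lt_of_le hZz.1 with heq | hlt
        · exact absurd (heq ▸ hZz.2) hcase
        · exact hlt
      set u := z - 1 with hu
      have hzu : z = u + 1 := by omega
      have hrun : ∀ s, m - 1 ≤ s → s ≤ u → (exps T1).getD s 0 ≠ 0 := by
        intro s h1 h2 hzero
        exact Nat.find_min hZex (show s < z by omega) ⟨h1, hzero⟩
      have hfr := run_chain (u := u) hm2 hlev hch hrun
      have hu1 : (exps T1).getD u 0 ≠ 0 := hrun u (by omega) le_rfl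
      have hu0 : (exps T1).getD (u + 1) 0 = 0 := by rw [← hzu]; exact hZz.2
      have hs1 : SibPair T1 u := sib_exps T1 u hu1 hu0
      have hs2 : SibPair T2 u := by
        apply sib_exps T2 u
        · rw [← hfr u (by omega) (by omega)]; exact hu1
        · rw [← hfr (u + 1) (by omega) (by omega)]; exact hu0
      exact hred ⟨u, hs1, hs2⟩
  · intro h
    have hm'S : m' + 1 ∈ insert 0 (I : Set ℕ) := by rw [← hm']; exact hmS
    have h1 := reach_allRight_S h0 hm'S T1
      (fun t h1 h2 => (h t h1 (by omega)).1)
    have h2 := reach_allRight_S h0 hm'S T2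
      (fun t h1 h2 => (h t h1 (by omega)).2)
    rw [hn] at h1
    exact reach_trans h1 (reach_symm h2)
end
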